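/- arXiv:1409.6773 — 7 statements merged into one kernel-verified Lean document; each statement's English description precedes it below -/
import Mathlib

section
/- For the discontinuous payoff U(ρ,τ) = |f(ρ) − f(τ)| with f the indicator of (T/2, T], the upper game value over Type I strategies equals one: inf_{𝛒 ∈ 𝕋^i} sup_{τ ∈ 𝒯} E[U(𝛒(τ),τ)] = 1. -/
open MeasureTheory Filter Set

namespace OSG

variable {Ω : Type*} {m : MeasurableSpace Ω}

/-- The set of `𝔽`-stopping times with values in `[0, T]`. -/
def ST (𝓕 : Filtration ℝ m) (T : ℝ) : Set (Ω → ℝ) :=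
  {σ | IsStoppingTime 𝓕 (fun ω => (σ ω : WithTop ℝ)) ∧ ∀ ω, σ ω ∈ Set.Icc (0 : ℝ) T}

/-- `𝒯_{σ+}` : stopping times strictly after `σ` (equal to `T` where `σ = T`). -/
def STplus (𝓕 : Filtration ℝ m) (μ : Measure Ω) (T : ℝ) (σ : Ω → ℝ) : Set (Ω → ℝ) :=
  {ρ | ρ ∈ ST 𝓕 T ∧ ∀ᵐ ω ∂μ, (σ ω < T → σ ω < ρ ω) ∧ (σ ω = T → ρ ω = T)}

/-- The filtration satisfies the usual conditions: completeness and right continuity on `[0,T)`. -/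
def UsualConditions (𝓕 : Filtration ℝ m) (μ : Measure Ω) (T : ℝ) : Prop :=
  (∀ s : Set Ω, μ s = 0 → MeasurableSet[𝓕 0] s) ∧
  (∀ t : ℝ, t ∈ Set.Ico (0 : ℝ) T → (𝓕 t : MeasurableSpace Ω) = ⨅ u ∈ Set.Ioc t T, 𝓕 u)

/-- Stopping strategies of Type I. -/
def TypeI (𝓕 : Filtration ℝ m) (μ : Measure Ω) (T : ℝ) (r : (Ω → ℝ) → Ω → ℝ) : Prop :=
  (∀ σ ∈ ST 𝓕 T, r σ ∈ ST 𝓕 T) ∧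
  ∀ σ₁ ∈ ST 𝓕 T, ∀ σ₂ ∈ ST 𝓕 T, ∀ᵐ ω ∂μ,
    (r σ₁ ω = r σ₂ ω ∧ r σ₁ ω ≤ min (σ₁ ω) (σ₂ ω)) ∨
    min (σ₁ ω) (σ₂ ω) < min (r σ₁ ω) (r σ₂ ω)

/-- Stopping strategies of Type II. -/
def TypeII (𝓕 : Filtration ℝ m) (μ : Measure Ω) (T : ℝ) (r : (Ω → ℝ) → Ω → ℝ) : Prop :=
  (∀ σ ∈ ST 𝓕 T, r σ ∈ ST 𝓕 T) ∧
  ∀ σ₁ ∈ ST 𝓕 T, ∀ σ₂ ∈ ST 𝓕 T, ∀ᵐ ω ∂μ,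
    (r σ₁ ω = r σ₂ ω ∧ r σ₁ ω < min (σ₁ ω) (σ₂ ω)) ∨
    min (σ₁ ω) (σ₂ ω) ≤ min (r σ₁ ω) (r σ₂ ω)

/-- Biadmissible family `{U(ρ,τ)}`. -/
def Biadmissible (𝓕 : Filtration ℝ m) (μ : Measure Ω) (T : ℝ)
    (U : (Ω → ℝ) → (Ω → ℝ) → Ω → ℝ) : Prop :=
  (∃ C : ℝ, ∀ ρ ∈ ST 𝓕 T, ∀ τ ∈ ST 𝓕 T, ∀ᵐ ω ∂μ, |U ρ τ ω| ≤ C) ∧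
  (∀ ρ τ : Ω → ℝ, ∀ (hρ : ρ ∈ ST 𝓕 T) (hτ : τ ∈ ST 𝓕 T),
    Measurable[(hρ.1.max hτ.1).measurableSpace] (U ρ τ)) ∧
  (∀ ρ₁ ∈ ST 𝓕 T, ∀ ρ₂ ∈ ST 𝓕 T, ∀ τ₁ ∈ ST 𝓕 T, ∀ τ₂ ∈ ST 𝓕 T,
    ∀ᵐ ω ∂μ, ρ₁ ω = ρ₂ ω → τ₁ ω = τ₂ ω → U ρ₁ τ₁ ω = U ρ₂ τ₂ ω)

/-- Uniform right continuity in expectation along stopping times. -/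
def URCE (𝓕 : Filtration ℝ m) (μ : Measure Ω) (T : ℝ)
    (U : (Ω → ℝ) → (Ω → ℝ) → Ω → ℝ) : Prop :=
  ∀ ρ ∈ ST 𝓕 T, ∀ τ ∈ ST 𝓕 T, ∀ ρs τs : ℕ → Ω → ℝ,
    (∀ n, ρs n ∈ ST 𝓕 T) → (∀ n, τs n ∈ ST 𝓕 T) →
    (∀ᵐ ω ∂μ, Antitone (fun n => ρs n ω) ∧
      Tendsto (fun n => ρs n ω) atTop (nhds (ρ ω))) →
    (∀ᵐ ω ∂μ, Antitone (fun n => τs n ω) ∧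
      Tendsto (fun n => τs n ω) atTop (nhds (τ ω))) →
    Tendsto (fun n => ⨆ ρ' : ST 𝓕 T,
        |(∫ ω, U ρ' τ ω ∂μ) - ∫ ω, U ρ' (τs n) ω ∂μ|) atTop (nhds 0) ∧
    Tendsto (fun n => ⨆ τ' : ST 𝓕 T,
        |(∫ ω, U ρ τ' ω ∂μ) - ∫ ω, U (ρs n) τ' ω ∂μ|) atTop (nhds 0)

/-- `V¹(τ) = essinf_{ρ ∈ 𝒯_τ} E[U(ρ,τ) | ℱ_τ]`, characterized by its defining properties. -/
def IsV1 (𝓕 : Filtration ℝ m) (μ : Measure Ω) (T : ℝ)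
    (U : (Ω → ℝ) → (Ω → ℝ) → Ω → ℝ) (V1 : (Ω → ℝ) → Ω → ℝ) : Prop :=
  ∀ τ : Ω → ℝ, ∀ hτ : τ ∈ ST 𝓕 T,
    StronglyMeasurable[hτ.1.measurableSpace] (V1 τ) ∧
    (∀ ρ ∈ ST 𝓕 T, (∀ᵐ ω ∂μ, τ ω ≤ ρ ω) →
      V1 τ ≤ᵐ[μ] μ[U ρ τ | hτ.1.measurableSpace]) ∧
    (∀ Z : Ω → ℝ,
      (∀ ρ ∈ ST 𝓕 T, (∀ᵐ ω ∂μ, τ ω ≤ ρ ω) →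
        Z ≤ᵐ[μ] μ[U ρ τ | hτ.1.measurableSpace]) →
      Z ≤ᵐ[μ] V1 τ)

/-- `V²(ρ) = esssup_{τ ∈ 𝒯_ρ} E[U(ρ,τ) | ℱ_ρ]`, characterized by its defining properties. -/
def IsV2 (𝓕 : Filtration ℝ m) (μ : Measure Ω) (T : ℝ)
    (U : (Ω → ℝ) → (Ω → ℝ) → Ω → ℝ) (V2 : (Ω → ℝ) → Ω → ℝ) : Prop :=
  ∀ ρ : Ω → ℝ, ∀ hρ : ρ ∈ ST 𝓕 T,
    StronglyMeasurable[hρ.1.measurableSpace] (V2 ρ) ∧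
    (∀ τ ∈ ST 𝓕 T, (∀ᵐ ω ∂μ, ρ ω ≤ τ ω) →
      μ[U ρ τ | hρ.1.measurableSpace] ≤ᵐ[μ] V2 ρ) ∧
    (∀ Z : Ω → ℝ,
      (∀ τ ∈ ST 𝓕 T, (∀ᵐ ω ∂μ, ρ ω ≤ τ ω) →
        μ[U ρ τ | hρ.1.measurableSpace] ≤ᵐ[μ] Z) →
      V2 ρ ≤ᵐ[μ] Z)

/-- `inf_{r ∈ strat} sup_{τ ∈ 𝒯} E[U(r(τ),τ)]`. -/
noncomputable def upperGame (𝓕 : Filtration ℝ m) (μ : Measure Ω) (T : ℝ)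
    (strat : ((Ω → ℝ) → Ω → ℝ) → Prop) (U : (Ω → ℝ) → (Ω → ℝ) → Ω → ℝ) : ℝ :=
  sInf {x | ∃ r, strat r ∧
    x = sSup {y | ∃ τ ∈ ST 𝓕 T, y = ∫ ω, U (r τ) τ ω ∂μ}}

/-- `sup_{r ∈ strat} inf_{ρ ∈ 𝒯} E[U(ρ, r(ρ))]`. -/
noncomputable def lowerGame (𝓕 : Filtration ℝ m) (μ : Measure Ω) (T : ℝ)
    (strat : ((Ω → ℝ) → Ω → ℝ) → Prop) (U : (Ω → ℝ) → (Ω → ℝ) → Ω → ℝ) : ℝ :=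
  sSup {x | ∃ r, strat r ∧
    x = sInf {y | ∃ ρ ∈ ST 𝓕 T, y = ∫ ω, U ρ (r ρ) ω ∂μ}}

/-- `V̅ := inf_ρ sup_τ E[V¹(τ)1_{τ≤ρ} + V²(ρ)1_{τ>ρ}]`. -/
noncomputable def upperV (𝓕 : Filtration ℝ m) (μ : Measure Ω) (T : ℝ)
    (V1 V2 : (Ω → ℝ) → Ω → ℝ) : ℝ :=
  sInf {x | ∃ ρ ∈ ST 𝓕 T,
    x = sSup {y | ∃ τ ∈ ST 𝓕 T,
      y = ∫ ω, (if τ ω ≤ ρ ω then V1 τ ω else V2 ρ ω) ∂μ}}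

/-- `V̲ := sup_τ inf_ρ E[V¹(τ)1_{τ≤ρ} + V²(ρ)1_{τ>ρ}]`. -/
noncomputable def lowerV (𝓕 : Filtration ℝ m) (μ : Measure Ω) (T : ℝ)
    (V1 V2 : (Ω → ℝ) → Ω → ℝ) : ℝ :=
  sSup {x | ∃ τ ∈ ST 𝓕 T,
    x = sInf {y | ∃ ρ ∈ ST 𝓕 T,
      y = ∫ ω, (if τ ω ≤ ρ ω then V1 τ ω else V2 ρ ω) ∂μ}}

/-- For `U(ρ,τ) = |f(ρ) - f(τ)|` with `f` the indicator of `(T/2, T]`, the upper game value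
over Type I strategies equals `1`. -/
theorem stmt_2 {Ω : Type*} {m : MeasurableSpace Ω} (μ : Measure Ω) [IsProbabilityMeasure μ]
    (𝓕 : Filtration ℝ m) (T : ℝ) (hT : 0 < T) (huc : UsualConditions 𝓕 μ T)
    (f : ℝ → ℝ) (hf : ∀ t : ℝ, f t = if t ≤ T / 2 then 0 else 1) :
    upperGame 𝓕 μ T (TypeI 𝓕 μ T) (fun ρ τ ω => |f (ρ ω) - f (τ ω)|) = 1 := by
  have hf_le : ∀ a b : ℝ, |f a - f b| ≤ 1 := by
    intro a b; rw [hf, hf]; split <;> split <;> norm_num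
  -- integrals of the payoff are ≤ 1
  have key_le : ∀ g : Ω → ℝ, (∀ ω, g ω ∈ Set.Icc (0:ℝ) 1) → ∫ ω, g ω ∂μ ≤ 1 := by
    intro g hg
    by_cases hi : Integrable g μ
    · calc ∫ ω, g ω ∂μ ≤ ∫ _, (1:ℝ) ∂μ := integral_mono hi (integrable_const 1) fun ω => (hg ω).2
        _ = 1 := by simp
    · rw [integral_undef hi]; norm_num
  -- for any Type I strategy, the value 1 is attained by some τ
  have key_mem : ∀ r, TypeI 𝓕 μ T r →
      (1:ℝ) ∈ {y | ∃ τ ∈ ST 𝓕 T, y = ∫ ω, |f (r τ ω) - f (τ ω)| ∂μ} := by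
    intro r hr
    have hTmem : (fun _ : Ω => T) ∈ ST 𝓕 T :=
      ⟨isStoppingTime_const _ _, fun ω => ⟨hT.le, le_refl T⟩⟩
    set ρT := r (fun _ => T) with hρT
    have hρTmem : ρT ∈ ST 𝓕 T := hr.1 _ hTmem
    set τ : Ω → ℝ := fun ω => if ρT ω ≤ T/2 then T else T/2 with hτdef
    have hτst : IsStoppingTime 𝓕 (fun ω => (τ ω : WithTop ℝ)) := by
      intro t
      simp only [WithTop.coe_le_coe]
      rcases lt_or_ge t (T/2) with h1 | h1
      · have : {ω | τ ω ≤ t} = ∅ := by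
          ext ω; simp only [Set.mem_setOf_eq, Set.mem_empty_iff_false, iff_false, hτdef]
          split <;> · intro h; linarith
        rw [this]; exact @MeasurableSet.empty Ω (𝓕 t)
      rcases le_or_gt T t with h2 | h2
      · have : {ω | τ ω ≤ t} = Set.univ := by
          ext ω; simp only [Set.mem_setOf_eq, Set.mem_univ, iff_true, hτdef]
          split <;> linarith
        rw [this]; exact @MeasurableSet.univ Ω (𝓕 t)
      · have : {ω | τ ω ≤ t} = {ω | ρT ω ≤ T/2}ᶜ := by
          ext ω; simp only [Set.mem_setOf_eq, Set.mem_compl_iff, hτdef]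
          split <;> rename_i h
          · simp [h]; linarith
          · simp [h]; linarith
        rw [this]
        exact (𝓕.mono h1 _ (by simpa only [WithTop.coe_le_coe] using hρTmem.1 (T/2))).compl
    have hτmem : τ ∈ ST 𝓕 T := by
      refine ⟨hτst, fun ω => ?_⟩
      simp only [hτdef]; split <;> constructor <;> linarith
    refine ⟨τ, hτmem, ?_⟩
    have hdich := hr.2 τ hτmem (fun _ => T) hTmem
    have hone : ∀ᵐ ω ∂μ, |f (r τ ω) - f (τ ω)| = 1 := by
      filter_upwards [hdich] with ω h
      have hτT : τ ω ≤ T := (hτmem.2 ω).2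
      have hρTT : ρT ω ≤ T := (hρTmem.2 ω).2
      rcases h with ⟨heq, hle⟩ | hlt
      · -- r τ = ρT ≤ τ
        by_cases hc : ρT ω ≤ T/2
        · have hτω : τ ω = T := by simp [hτdef, hc]
          rw [hτω, hf, hf, heq]
          rw [if_pos hc, if_neg (by linarith)]
          norm_num
        · exfalso
          have hτω : τ ω = T/2 := by simp [hτdef, hc]
          have : r τ ω ≤ T/2 := by
            have := le_trans hle (min_le_left _ _); rwa [hτω] at this
          rw [heq] at this; exact hc this
      · -- τ < min (r τ) ρT
        by_cases hc : ρT ω ≤ T/2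
        · exfalso
          have hτω : τ ω = T := by simp [hτdef, hc]
          have : min (τ ω) T < ρT ω := lt_of_lt_of_le hlt (min_le_right _ _)
          rw [hτω, min_self] at this; linarith
        · have hτω : τ ω = T/2 := by simp [hτdef, hc]
          have h1 : min (τ ω) T = T/2 := by rw [hτω]; exact min_eq_left (by linarith)
          have h2 : T/2 < r τ ω := by
            have := lt_of_lt_of_le hlt (min_le_left _ _); rwa [h1] at this
          rw [hτω, hf, hf, if_neg (not_le.mpr h2), if_pos (le_refl _)]
          norm_num
    calc (1:ℝ) = ∫ _, (1:ℝ) ∂μ := by simp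
      _ = ∫ ω, |f (r τ ω) - f (τ ω)| ∂μ := (integral_congr_ae hone).symm
  -- bddAbove of inner sets
  have hbdd : ∀ r : (Ω → ℝ) → Ω → ℝ,
      ∀ y ∈ {y | ∃ τ ∈ ST 𝓕 T, y = ∫ ω, |f (r τ ω) - f (τ ω)| ∂μ}, y ≤ 1 := by
    rintro r y ⟨τ, hτ, rfl⟩
    exact key_le _ fun ω => ⟨abs_nonneg _, hf_le _ _⟩
  have hlow : ∀ x ∈ {x | ∃ r, TypeI 𝓕 μ T r ∧
      x = sSup {y | ∃ τ ∈ ST 𝓕 T, y = ∫ ω, |f (r τ ω) - f (τ ω)| ∂μ}}, (1:ℝ) ≤ x := by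
    rintro x ⟨r, hr, rfl⟩
    exact le_csSup ⟨1, hbdd r⟩ (key_mem r hr)
  have hr0 : TypeI 𝓕 μ T (fun _ _ => (0:ℝ)) :=
    ⟨fun σ hσ => ⟨isStoppingTime_const _ _, fun ω => ⟨le_refl 0, hT.le⟩⟩,
     fun σ₁ h₁ σ₂ h₂ => Filter.Eventually.of_forall fun ω =>
       Or.inl ⟨rfl, le_min (h₁.2 ω).1 (h₂.2 ω).1⟩⟩
  have h1mem : (1:ℝ) ∈ {x | ∃ r, TypeI 𝓕 μ T r ∧
      x = sSup {y | ∃ τ ∈ ST 𝓕 T, y = ∫ ω, |f (r τ ω) - f (τ ω)| ∂μ}} := by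
    refine ⟨fun _ _ => 0, hr0, ?_⟩
    refine (le_antisymm (csSup_le ⟨1, key_mem _ hr0⟩ (hbdd _))
      (le_csSup ⟨1, hbdd _⟩ (key_mem _ hr0))).symm
  show sInf _ = 1
  exact le_antisymm (csInf_le ⟨1, hlow⟩ h1mem) (le_csInf ⟨1, h1mem⟩ hlow)


end OSG
end

section
/- For the discontinuous payoff U(ρ,τ) = |f(ρ) − f(τ)| with f the indicator of (T/2, T], the lower game value over Type I strategies equals zero: sup_{𝛕 ∈ 𝕋^i} inf_{ρ ∈ 𝒯} E[U(ρ,𝛕(ρ))] = 0. In particular, combined with the upper value being 1, the two Type I game values differ. -/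
open MeasureTheory Filter Set

namespace OSG

variable {Ω : Type*} {m : MeasurableSpace Ω}

/-- For `U(ρ,τ) = |f(ρ) - f(τ)|` with `f` the indicator of `(T/2, T]`, the lower game value
over Type I strategies equals `0`; in particular the two Type I game values differ. -/
theorem stmt_3 {Ω : Type*} {m : MeasurableSpace Ω} (μ : Measure Ω) [IsProbabilityMeasure μ]
    (𝓕 : Filtration ℝ m) (T : ℝ) (hT : 0 < T) (huc : UsualConditions 𝓕 μ T)
    (f : ℝ → ℝ) (hf : ∀ t : ℝ, f t = if t ≤ T / 2 then 0 else 1) :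
    lowerGame 𝓕 μ T (TypeI 𝓕 μ T) (fun ρ τ ω => |f (ρ ω) - f (τ ω)|) = 0 ∧
    lowerGame 𝓕 μ T (TypeI 𝓕 μ T) (fun ρ τ ω => |f (ρ ω) - f (τ ω)|) ≠
      upperGame 𝓕 μ T (TypeI 𝓕 μ T) (fun ρ τ ω => |f (ρ ω) - f (τ ω)|) := by
  classical
  set U : (Ω → ℝ) → (Ω → ℝ) → Ω → ℝ := fun ρ τ ω => |f (ρ ω) - f (τ ω)| with hU
  -- basic facts about f and U
  have hfm : Measurable f := by
    have hfe : f = fun t => if t ≤ T / 2 then (0 : ℝ) else 1 := funext hf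
    rw [hfe]
    exact Measurable.ite (measurableSet_le measurable_id measurable_const)
      measurable_const measurable_const
  have hf01 : ∀ t : ℝ, f t = 0 ∨ f t = 1 := by
    intro t; rw [hf]; split_ifs <;> simp
  have hUbd : ∀ ρ τ : Ω → ℝ, ∀ ω, U ρ τ ω ≤ 1 := by
    intro ρ τ ω
    simp only [hU]
    rcases hf01 (ρ ω) with h1 | h1 <;> rcases hf01 (τ ω) with h2 | h2 <;>
      rw [h1, h2] <;> norm_num
  have hUnn : ∀ ρ τ : Ω → ℝ, ∀ ω, 0 ≤ U ρ τ ω := fun ρ τ ω => abs_nonneg _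
  have hmeasST : ∀ ρ : Ω → ℝ, ρ ∈ ST 𝓕 T → Measurable ρ := by
    intro ρ hρ
    exact ((WithTop.measurable_untopD (0 : ℝ)).comp
      (hρ.1.measurable_of_le (i := T) (fun ω => WithTop.coe_le_coe.mpr (hρ.2 ω).2))).mono (𝓕.le T) le_rfl
  have hUint : ∀ ρ τ : Ω → ℝ, ρ ∈ ST 𝓕 T → τ ∈ ST 𝓕 T → Integrable (U ρ τ) μ := by
    intro ρ τ hρ hτ
    have hm : Measurable (U ρ τ) :=
      ((hfm.comp (hmeasST ρ hρ)).sub (hfm.comp (hmeasST τ hτ))).abs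
    refine (integrable_const (1 : ℝ)).mono' hm.aestronglyMeasurable ?_
    filter_upwards with ω
    rw [Real.norm_eq_abs, abs_of_nonneg (hUnn ρ τ ω)]
    exact hUbd ρ τ ω
  -- constant stopping times
  have hconstST : ∀ c : ℝ, 0 ≤ c → c ≤ T → (fun _ : Ω => c) ∈ ST 𝓕 T :=
    fun c h0 h1 => ⟨isStoppingTime_const 𝓕 c, fun ω => ⟨h0, h1⟩⟩
  have hTbar : (fun _ : Ω => T) ∈ ST 𝓕 T := hconstST T hT.le le_rfl
  have hZbar : (fun _ : Ω => (0 : ℝ)) ∈ ST 𝓕 T := hconstST 0 le_rfl hT.le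
  have hHbar : (fun _ : Ω => T / 2) ∈ ST 𝓕 T := hconstST (T / 2) (by linarith) (by linarith)
  -- the constant-zero strategy is of Type I
  have hr0 : TypeI 𝓕 μ T (fun _ _ => (0 : ℝ)) := by
    constructor
    · intro σ _; exact hZbar
    · intro σ₁ h₁ σ₂ h₂
      filter_upwards with ω
      exact Or.inl ⟨rfl, le_min (h₁.2 ω).1 (h₂.2 ω).1⟩
  -- for any Type I strategy, the inner infimum of the lower game is 0
  have key : ∀ r, TypeI 𝓕 μ T r →
      sInf {y | ∃ ρ ∈ ST 𝓕 T, y = ∫ ω, U ρ (r ρ) ω ∂μ} = 0 := by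
    intro r hr
    set ρs := r (fun _ => T) with hρs
    have hρsST : ρs ∈ ST 𝓕 T := hr.1 _ hTbar
    have hfix : ∀ᵐ ω ∂μ, r ρs ω = ρs ω := by
      filter_upwards [hr.2 ρs hρsST (fun _ => T) hTbar] with ω h
      rcases h with ⟨h1, _⟩ | h2
      · exact h1
      · exfalso
        have hle : ρs ω ≤ T := (hρsST.2 ω).2
        have h3 : min (ρs ω) T = ρs ω := min_eq_left hle
        rw [h3] at h2
        have : min (r ρs ω) (r (fun _ => T) ω) ≤ ρs ω := by
          rw [hρs]; exact min_le_right _ _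
        linarith
    have hzero : (∫ ω, U ρs (r ρs) ω ∂μ) = 0 := by
      rw [integral_congr_ae (g := fun _ => (0 : ℝ)) ?_, integral_zero]
      filter_upwards [hfix] with ω h
      simp only [hU, h, sub_self, abs_zero]
    have hmem : (0 : ℝ) ∈ {y | ∃ ρ ∈ ST 𝓕 T, y = ∫ ω, U ρ (r ρ) ω ∂μ} :=
      ⟨ρs, hρsST, hzero.symm⟩
    have hlb : ∀ y ∈ {y | ∃ ρ ∈ ST 𝓕 T, y = ∫ ω, U ρ (r ρ) ω ∂μ}, (0 : ℝ) ≤ y := by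
      rintro y ⟨ρ, hρ, rfl⟩
      exact integral_nonneg (fun ω => hUnn _ _ ω)
    exact le_antisymm (csInf_le ⟨0, hlb⟩ hmem) (le_csInf ⟨0, hmem⟩ hlb)
  -- lower game equals 0
  have hlow : lowerGame 𝓕 μ T (TypeI 𝓕 μ T) U = 0 := by
    unfold lowerGame
    have hmem0 : (0 : ℝ) ∈ {x | ∃ r, TypeI 𝓕 μ T r ∧
        x = sInf {y | ∃ ρ ∈ ST 𝓕 T, y = ∫ ω, U ρ (r ρ) ω ∂μ}} :=
      ⟨fun _ _ => 0, hr0, (key _ hr0).symm⟩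
    have hub : ∀ x ∈ {x | ∃ r, TypeI 𝓕 μ T r ∧
        x = sInf {y | ∃ ρ ∈ ST 𝓕 T, y = ∫ ω, U ρ (r ρ) ω ∂μ}}, x ≤ (0 : ℝ) := by
      rintro x ⟨r, hr, rfl⟩
      rw [key r hr]
    exact le_antisymm (csSup_le ⟨0, hmem0⟩ hub) (le_csSup ⟨0, hub⟩ hmem0)
  -- upper game is at least 1/2
  have hup : (1 / 2 : ℝ) ≤ upperGame 𝓕 μ T (TypeI 𝓕 μ T) U := by
    unfold upperGame
    refine le_csInf ⟨_, fun _ _ => 0, hr0, rfl⟩ ?_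
    rintro x ⟨r, hr, rfl⟩
    have hrH : r (fun _ => T / 2) ∈ ST 𝓕 T := hr.1 _ hHbar
    have hrT : r (fun _ => T) ∈ ST 𝓕 T := hr.1 _ hTbar
    have hae : ∀ᵐ ω ∂μ, (1 : ℝ) ≤ U (r fun _ => T / 2) (fun _ => T / 2) ω
        + U (r fun _ => T) (fun _ => T) ω := by
      filter_upwards [hr.2 _ hHbar _ hTbar] with ω h
      have hfT : f T = 1 := by rw [hf]; rw [if_neg (by linarith)]
      have hfH : f (T / 2) = 0 := by rw [hf]; rw [if_pos le_rfl]
      have hmin : min (T / 2) T = T / 2 := min_eq_left (by linarith)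
      rcases h with ⟨h1, h2⟩ | h2
      · -- r τ₁ = r τ₂ ≤ T/2, so U for τ₂ = T is 1
        rw [hmin] at h2
        have : f (r (fun _ => T) ω) = 0 := by
          rw [hf, if_pos]; rw [← h1]; exact h2
        have hv : U (r fun _ => T) (fun _ => T) ω = 1 := by
          simp only [hU, this, hfT]; norm_num
        have := hUnn (r fun _ => T / 2) (fun _ => T / 2) ω
        linarith
      · -- T/2 < r τ₁, so U for τ₁ = T/2 is 1
        rw [hmin] at h2
        have hlt : T / 2 < r (fun _ => T / 2) ω := lt_of_lt_of_le h2 (min_le_left _ _)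
        have : f (r (fun _ => T / 2) ω) = 1 := by
          rw [hf, if_neg (not_le.mpr hlt)]
        have hv : U (r fun _ => T / 2) (fun _ => T / 2) ω = 1 := by
          simp only [hU, this, hfH]; norm_num
        have := hUnn (r fun _ => T) (fun _ => T) ω
        linarith
    have hint1 : Integrable (U (r fun _ => T / 2) (fun _ => T / 2)) μ :=
      hUint _ _ hrH hHbar
    have hint2 : Integrable (U (r fun _ => T) (fun _ => T)) μ := hUint _ _ hrT hTbar
    have hsum : (1 : ℝ) ≤ (∫ ω, U (r fun _ => T / 2) (fun _ => T / 2) ω ∂μ)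
        + ∫ ω, U (r fun _ => T) (fun _ => T) ω ∂μ := by
      have h1 : (∫ _ : Ω, (1 : ℝ) ∂μ) ≤ ∫ ω, (U (r fun _ => T / 2) (fun _ => T / 2) ω
          + U (r fun _ => T) (fun _ => T) ω) ∂μ :=
        integral_mono_ae (integrable_const 1) (hint1.add hint2) hae
      rw [integral_const, probReal_univ] at h1
      simpa [integral_add hint1 hint2] using h1
    have hbdd : BddAbove {y | ∃ τ ∈ ST 𝓕 T, y = ∫ ω, U (r τ) τ ω ∂μ} := by
      refine ⟨1, ?_⟩
      rintro y ⟨τ, hτ, rfl⟩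
      calc (∫ ω, U (r τ) τ ω ∂μ) ≤ ∫ _ : Ω, (1 : ℝ) ∂μ :=
            integral_mono (hUint _ _ (hr.1 _ hτ) hτ) (integrable_const 1)
              (fun ω => hUbd _ _ ω)
        _ = 1 := by rw [integral_const, probReal_univ]; simp
    rcases le_or_gt (1 / 2 : ℝ) (∫ ω, U (r fun _ => T / 2) (fun _ => T / 2) ω ∂μ) with h | h
    · exact h.trans (le_csSup hbdd ⟨_, hHbar, rfl⟩)
    · have : (1 / 2 : ℝ) ≤ ∫ ω, U (r fun _ => T) (fun _ => T) ω ∂μ := by linarith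
      exact this.trans (le_csSup hbdd ⟨_, hTbar, rfl⟩)
  refine ⟨hlow, ?_⟩
  rw [hlow]
  intro h
  rw [← h] at hup
  linarith


end OSG
end

section
/- For the discontinuous payoff U(ρ,τ) = |f(ρ) − f(τ)| with f the indicator of (T/2, T], the map 𝛕 defined by 𝛕(ρ) := T on {ρ ≤ T/2} and 𝛕(ρ) := T/2 on {ρ > T/2} maps 𝒯 into 𝒯 and is a stopping strategy of Type II, and the lower game value over Type II strategies equals one: sup_{𝛕' ∈ 𝕋^ii} inf_{ρ ∈ 𝒯} E[U(ρ,𝛕'(ρ))] = 1. In particular, combined with the upper Type II value being 0, the two Type II game values differ. -/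
open MeasureTheory Filter Set

namespace OSG

variable {Ω : Type*} {m : MeasurableSpace Ω}

/-- For `U(ρ,τ) = |f(ρ) - f(τ)|` with `f` the indicator of `(T/2, T]`, the map
`𝛕(ρ) := T` on `{ρ ≤ T/2}` and `:= T/2` on `{ρ > T/2}` maps `𝒯` into `𝒯` and is a Type II
strategy, and the lower game value over Type II strategies equals `1`; in particular the two
Type II game values differ. -/
theorem stmt_5 {Ω : Type*} {m : MeasurableSpace Ω} (μ : Measure Ω) [IsProbabilityMeasure μ]
    (𝓕 : Filtration ℝ m) (T : ℝ) (hT : 0 < T) (huc : UsualConditions 𝓕 μ T)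
    (f : ℝ → ℝ) (hf : ∀ t : ℝ, f t = if t ≤ T / 2 then 0 else 1) :
    (∀ ρ ∈ ST 𝓕 T,
      (fun ω => if ρ ω ≤ T / 2 then T else T / 2) ∈ ST 𝓕 T) ∧
    TypeII 𝓕 μ T (fun ρ ω => if ρ ω ≤ T / 2 then T else T / 2) ∧
    lowerGame 𝓕 μ T (TypeII 𝓕 μ T) (fun ρ τ ω => |f (ρ ω) - f (τ ω)|) = 1 ∧
    lowerGame 𝓕 μ T (TypeII 𝓕 μ T) (fun ρ τ ω => |f (ρ ω) - f (τ ω)|) ≠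
      upperGame 𝓕 μ T (TypeII 𝓕 μ T) (fun ρ τ ω => |f (ρ ω) - f (τ ω)|) := by

  have hT2 : (0:ℝ) < T / 2 := by linarith
  have hT2T : T / 2 < T := by linarith
  -- the candidate strategy
  set r : (Ω → ℝ) → Ω → ℝ := fun ρ ω => if ρ ω ≤ T / 2 then T else T / 2 with hr
  -- constant 0 stopping time
  have hc0 : (fun _ : Ω => (0:ℝ)) ∈ ST 𝓕 T :=
    ⟨isStoppingTime_const 𝓕 0, fun ω => ⟨le_refl 0, hT.le⟩⟩
  -- part 1
  have hmem : ∀ ρ ∈ ST 𝓕 T, r ρ ∈ ST 𝓕 T := by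
    intro ρ hρ
    refine ⟨?_, ?_⟩
    · intro t
      simp only [WithTop.coe_le_coe]
      by_cases h1 : T ≤ t
      · have : {ω | r ρ ω ≤ t} = Set.univ := by
          ext ω
          simp only [hr, Set.mem_setOf_eq, Set.mem_univ, iff_true]
          split <;> linarith
        rw [this]; exact @MeasurableSet.univ _ (𝓕 t)
      · by_cases h2 : T / 2 ≤ t
        · have : {ω | r ρ ω ≤ t} = {ω | ρ ω ≤ T / 2}ᶜ := by
            ext ω
            simp only [hr, Set.mem_setOf_eq, Set.mem_compl_iff]
            split <;> constructor <;> intro hh <;> first | linarith | tauto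
          rw [this]
          have hm := hρ.1 (T / 2)
          simp only [WithTop.coe_le_coe] at hm
          exact 𝓕.mono h2 _ hm.compl
        · have : {ω | r ρ ω ≤ t} = ∅ := by
            ext ω
            simp only [hr, Set.mem_setOf_eq, Set.mem_empty_iff_false, iff_false]
            split <;> linarith
          rw [this]; exact @MeasurableSet.empty _ (𝓕 t)
    · intro ω
      simp only [hr]
      split <;> constructor <;> linarith
  -- part 2 : Type II
  have htypeII : TypeII 𝓕 μ T r := by
    refine ⟨hmem, ?_⟩
    intro σ₁ h₁ σ₂ h₂
    filter_upwards with ω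
    rcases le_or_gt (σ₁ ω) (T / 2) with c1 | c1 <;> rcases le_or_gt (σ₂ ω) (T / 2) with c2 | c2
    · right
      simp only [hr, if_pos c1, if_pos c2, min_self]
      exact le_trans (min_le_left _ _) (by linarith)
    · right
      simp only [hr, if_pos c1, if_neg (not_le.mpr c2)]
      refine le_trans (min_le_left _ _) (le_trans c1 ?_)
      exact le_min hT2T.le (le_refl _)
    · right
      simp only [hr, if_neg (not_le.mpr c1), if_pos c2]
      refine le_trans (min_le_right _ _) (le_trans c2 ?_)
      exact le_min (le_refl _) hT2T.le
    · left
      simp only [hr, if_neg (not_le.mpr c1), if_neg (not_le.mpr c2)]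
      exact ⟨by trivial, lt_min c1 c2⟩
  -- payoff facts
  have hfabs : ∀ a b : ℝ, |f a - f b| ≤ 1 := by
    intro a b
    rw [hf a, hf b]
    split <;> split <;> norm_num
  have hUbounds : ∀ ρ τ : Ω → ℝ,
      (0:ℝ) ≤ ∫ ω, |f (ρ ω) - f (τ ω)| ∂μ ∧ (∫ ω, |f (ρ ω) - f (τ ω)| ∂μ) ≤ 1 := by
    intro ρ τ
    constructor
    · exact integral_nonneg fun ω => abs_nonneg _
    · by_cases hi : Integrable (fun ω => |f (ρ ω) - f (τ ω)|) μ
      · calc (∫ ω, |f (ρ ω) - f (τ ω)| ∂μ) ≤ ∫ _, (1:ℝ) ∂μ :=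
              integral_mono hi (integrable_const 1) fun ω => hfabs _ _
          _ = 1 := by simp
      · rw [integral_undef hi]; norm_num
  -- the strategy r always gives payoff 1
  have hU1 : ∀ ρ : Ω → ℝ, (∫ ω, |f (ρ ω) - f (r ρ ω)| ∂μ) = 1 := by
    intro ρ
    have hfun : (fun ω => |f (ρ ω) - f (r ρ ω)|) = fun _ => (1:ℝ) := by
      funext ω
      simp only [hr]
      by_cases hc : ρ ω ≤ T / 2
      · rw [if_pos hc, hf (ρ ω), if_pos hc, hf T, if_neg (not_le.mpr hT2T)]
        norm_num
      · rw [if_neg hc, hf (ρ ω), if_neg hc, hf (T/2), if_pos (le_refl _)]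
        norm_num
    rw [hfun]
    simp
  -- lower game value = 1
  have hlow : lowerGame 𝓕 μ T (TypeII 𝓕 μ T) (fun ρ τ ω => |f (ρ ω) - f (τ ω)|) = 1 := by
    have h1mem : (1:ℝ) ∈ {x | ∃ r', TypeII 𝓕 μ T r' ∧
        x = sInf {y | ∃ ρ ∈ ST 𝓕 T, y = ∫ ω, |f (ρ ω) - f (r' ρ ω)| ∂μ}} := by
      refine ⟨r, htypeII, ?_⟩
      have : {y | ∃ ρ ∈ ST 𝓕 T, y = ∫ ω, |f (ρ ω) - f (r ρ ω)| ∂μ} = {1} := by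
        ext y
        simp only [Set.mem_setOf_eq, Set.mem_singleton_iff]
        constructor
        · rintro ⟨ρ, hρ, rfl⟩; exact hU1 ρ
        · rintro rfl; exact ⟨fun _ => 0, hc0, (hU1 _).symm⟩
      rw [this, csInf_singleton]
    have hub : ∀ x ∈ {x | ∃ r', TypeII 𝓕 μ T r' ∧
        x = sInf {y | ∃ ρ ∈ ST 𝓕 T, y = ∫ ω, |f (ρ ω) - f (r' ρ ω)| ∂μ}}, x ≤ 1 := by
      rintro x ⟨r', hr', rfl⟩
      have hx0 : (∫ ω, |f ((0:Ω → ℝ) ω) - f (r' (fun _ => 0) ω)| ∂μ) ∈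
          {y | ∃ ρ ∈ ST 𝓕 T, y = ∫ ω, |f (ρ ω) - f (r' ρ ω)| ∂μ} :=
        ⟨fun _ => 0, hc0, rfl⟩
      have hbdd : BddBelow {y | ∃ ρ ∈ ST 𝓕 T, y = ∫ ω, |f (ρ ω) - f (r' ρ ω)| ∂μ} := by
        refine ⟨0, ?_⟩
        rintro y ⟨ρ, hρ, rfl⟩
        exact (hUbounds ρ (r' ρ)).1
      exact le_trans (csInf_le hbdd hx0) (hUbounds _ _).2
    unfold lowerGame
    exact le_antisymm (csSup_le ⟨1, h1mem⟩ hub) (le_csSup ⟨1, hub⟩ h1mem)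
  -- upper game value ≤ 0
  have hid : TypeII 𝓕 μ T (fun σ => σ) := by
    refine ⟨fun σ hσ => hσ, ?_⟩
    intro σ₁ h₁ σ₂ h₂
    filter_upwards with ω
    exact Or.inr (le_refl _)
  have hupper : upperGame 𝓕 μ T (TypeII 𝓕 μ T) (fun ρ τ ω => |f (ρ ω) - f (τ ω)|) ≤ 0 := by
    have h0mem : (0:ℝ) ∈ {x | ∃ r', TypeII 𝓕 μ T r' ∧
        x = sSup {y | ∃ τ ∈ ST 𝓕 T, y = ∫ ω, |f (r' τ ω) - f (τ ω)| ∂μ}} := by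
      refine ⟨fun σ => σ, hid, ?_⟩
      have : {y | ∃ τ ∈ ST 𝓕 T, y = ∫ ω, |f (τ ω) - f (τ ω)| ∂μ} = {0} := by
        ext y
        simp only [Set.mem_setOf_eq, Set.mem_singleton_iff]
        constructor
        · rintro ⟨τ, hτ, rfl⟩; simp
        · rintro rfl; exact ⟨fun _ => 0, hc0, by simp⟩
      rw [this, csSup_singleton]
    have hbdd : BddBelow {x | ∃ r', TypeII 𝓕 μ T r' ∧
        x = sSup {y | ∃ τ ∈ ST 𝓕 T, y = ∫ ω, |f (r' τ ω) - f (τ ω)| ∂μ}} := by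
      refine ⟨0, ?_⟩
      rintro x ⟨r', hr', rfl⟩
      have hx0 : (∫ ω, |f (r' (fun _ => 0) ω) - f ((0:Ω → ℝ) ω)| ∂μ) ∈
          {y | ∃ τ ∈ ST 𝓕 T, y = ∫ ω, |f (r' τ ω) - f (τ ω)| ∂μ} :=
        ⟨fun _ => 0, hc0, rfl⟩
      have hba : BddAbove {y | ∃ τ ∈ ST 𝓕 T, y = ∫ ω, |f (r' τ ω) - f (τ ω)| ∂μ} := by
        refine ⟨1, ?_⟩
        rintro y ⟨τ, hτ, rfl⟩
        exact (hUbounds _ _).2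
      exact le_trans (hUbounds _ _).1 (le_csSup hba hx0)
    exact csInf_le hbdd h0mem
  refine ⟨hmem, htypeII, hlow, ?_⟩
  rw [hlow]
  intro heq
  rw [← heq] at hupper
  linarith


end OSG
end

section
/- Let W : [0,T] × [0,T] × ℝ × ℝ → ℝ be Borel measurable and L-Lipschitz for some L ∈ (0,∞), i.e. |W(s₁,t₁,x₁,y₁) − W(s₂,t₂,x₂,y₂)| ≤ L(|s₁−s₂| + |t₁−t₂| + |x₁−x₂| + |y₁−y₂|) for all arguments, and let f = (f_t)_{0≤t≤T} and g = (g_t)_{0≤t≤T} be bounded, right-continuous, 𝔽-progressively measurable real-valued processes. Then the family U(ρ,τ) := W(ρ, τ, f_ρ, g_τ), ρ, τ ∈ 𝒯, is biadmissible and uniformly right continuous in expectation along stopping times (URCE). -/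
open MeasureTheory Filter Set

namespace OSG

variable {Ω : Type*} {m : MeasurableSpace Ω}

private lemma tendsto_ciSup_of_le {ι : Sort*} [Nonempty ι] {F : ℕ → ι → ℝ} {b : ℕ → ℝ}
    (h0 : ∀ n i, 0 ≤ F n i) (hb : ∀ n i, F n i ≤ b n) (hbt : Tendsto b atTop (nhds 0)) :
    Tendsto (fun n => ⨆ i, F n i) atTop (nhds 0) := by
  refine tendsto_of_tendsto_of_tendsto_of_le_of_le (tendsto_const_nhds (x := (0:ℝ))) hbt
    (fun n => ?_) (fun n => ciSup_le (hb n))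
  exact le_ciSup_of_le ⟨b n, by rintro x ⟨i, rfl⟩; exact hb n i⟩ (Classical.arbitrary ι) (h0 n _)

private lemma urce_half {Ω : Type*} {m : MeasurableSpace Ω} (μ : Measure Ω) [IsProbabilityMeasure μ]
    (𝓕 : Filtration ℝ m) (T : ℝ) (L Cg : ℝ) (hL : 0 ≤ L)
    (g : ℝ → Ω → ℝ) (hgprog : ProgMeasurable 𝓕 g) (hCg : ∀ t ω, |g t ω| ≤ Cg)
    (hgrc : ∀ ω, ∀ t ∈ Set.Ico (0:ℝ) T, ContinuousWithinAt (fun s => g s ω) (Set.Ici t) t)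
    (τ : Ω → ℝ) (hτ : τ ∈ ST 𝓕 T) (τs : ℕ → Ω → ℝ) (hτs : ∀ n, τs n ∈ ST 𝓕 T)
    (hτconv : ∀ᵐ ω ∂μ, Antitone (fun n => τs n ω) ∧
      Tendsto (fun n => τs n ω) atTop (nhds (τ ω))) :
    Tendsto (fun n => ∫ ω, L * (|τ ω - τs n ω| + |g (τ ω) ω - g (τs n ω) ω|) ∂μ)
      atTop (nhds 0) := by
  have hτm : Measurable τ := by have := (hτ.1.measurable.mono hτ.1.measurableSpace_le le_rfl).untopD (0:ℝ); exact this
  have hτsm : ∀ n, Measurable (τs n) :=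
    fun n => by have := ((hτs n).1.measurable.mono (hτs n).1.measurableSpace_le le_rfl).untopD (0:ℝ); exact this
  have hgτ : Measurable fun ω => g (τ ω) ω :=
    (measurable_stoppedValue hgprog hτ.1).mono hτ.1.measurableSpace_le le_rfl
  have hgτs : ∀ n, Measurable fun ω => g (τs n ω) ω :=
    fun n => (measurable_stoppedValue hgprog (hτs n).1).mono (hτs n).1.measurableSpace_le le_rfl
  have key := tendsto_integral_of_dominated_convergence (μ := μ)
    (F := fun n ω => L * (|τ ω - τs n ω| + |g (τ ω) ω - g (τs n ω) ω|))
    (f := fun _ => (0:ℝ)) (bound := fun _ => L * (T + (Cg + Cg)))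
    (fun n => (((hτm.sub (hτsm n)).abs.add ((hgτ.sub (hgτs n)).abs)).const_mul
      L).aestronglyMeasurable)
    (integrable_const _)
    (fun n => by
      refine Eventually.of_forall fun ω => ?_
      have h1 : |τ ω - τs n ω| ≤ T := by
        have hx := hτ.2 ω; have hy := (hτs n).2 ω
        rw [abs_sub_le_iff]
        exact ⟨by linarith [hx.2, hy.1], by linarith [hy.2, hx.1]⟩
      have h2 : |g (τ ω) ω - g (τs n ω) ω| ≤ Cg + Cg :=
        (abs_sub _ _).trans (add_le_add (hCg _ _) (hCg _ _))
      have h3 : (0:ℝ) ≤ |τ ω - τs n ω| + |g (τ ω) ω - g (τs n ω) ω| :=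
        add_nonneg (abs_nonneg _) (abs_nonneg _)
      rw [Real.norm_eq_abs, abs_of_nonneg (mul_nonneg hL h3)]
      exact mul_le_mul_of_nonneg_left (add_le_add h1 h2) hL)
    ?_
  · simpa using key
  · filter_upwards [hτconv] with ω hω
    obtain ⟨hA, hTend⟩ := hω
    have h1 : Tendsto (fun n => τ ω - τs n ω) atTop (nhds 0) := by
      simpa using (tendsto_const_nhds (x := τ ω)).sub hTend
    have hg : Tendsto (fun n => g (τ ω) ω - g (τs n ω) ω) atTop (nhds 0) := by
      have hle : ∀ n, τ ω ≤ τs n ω := fun n => hA.le_of_tendsto hTend n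
      rcases lt_or_eq_of_le (hτ.2 ω).2 with hlt | heq
      · have hwithin : Tendsto (fun n => τs n ω) atTop (nhdsWithin (τ ω) (Set.Ici (τ ω))) :=
          tendsto_nhdsWithin_of_tendsto_nhds_of_eventually_within _ hTend
            (Eventually.of_forall fun n => hle n)
        have := (hgrc ω (τ ω) ⟨(hτ.2 ω).1, hlt⟩).tendsto.comp hwithin
        simpa using (tendsto_const_nhds (x := g (τ ω) ω)).sub this
      · have hconst : ∀ n, τs n ω = τ ω := fun n =>
          le_antisymm (heq ▸ ((hτs n).2 ω).2) (hle n)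
        have : (fun n => g (τ ω) ω - g (τs n ω) ω) = fun _ => 0 := by
          funext n; rw [hconst n, sub_self]
        rw [this]; exact tendsto_const_nhds
    have := (h1.abs.add hg.abs).const_mul L
    simpa using this

/-- If `W` is Borel measurable and `L`-Lipschitz and `f, g` are bounded right-continuous
progressively measurable processes, then `U(ρ,τ) := W(ρ, τ, f_ρ, g_τ)` is biadmissible
and URCE. -/
theorem stmt_6 {Ω : Type*} {m : MeasurableSpace Ω} (μ : Measure Ω) [IsProbabilityMeasure μ]
    (𝓕 : Filtration ℝ m) (T : ℝ) (hT : 0 < T) (huc : UsualConditions 𝓕 μ T)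
    (W : ℝ → ℝ → ℝ → ℝ → ℝ)
    (hWmeas : Measurable fun p : ℝ × ℝ × ℝ × ℝ => W p.1 p.2.1 p.2.2.1 p.2.2.2)
    (L : ℝ) (hL : 0 < L)
    (hWLip : ∀ s₁ ∈ Set.Icc (0 : ℝ) T, ∀ s₂ ∈ Set.Icc (0 : ℝ) T,
      ∀ t₁ ∈ Set.Icc (0 : ℝ) T, ∀ t₂ ∈ Set.Icc (0 : ℝ) T, ∀ x₁ x₂ y₁ y₂ : ℝ,
      |W s₁ t₁ x₁ y₁ - W s₂ t₂ x₂ y₂| ≤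
        L * (|s₁ - s₂| + |t₁ - t₂| + |x₁ - x₂| + |y₁ - y₂|))
    (f g : ℝ → Ω → ℝ)
    (hfprog : ProgMeasurable 𝓕 f) (hgprog : ProgMeasurable 𝓕 g)
    (hfbdd : ∃ C : ℝ, ∀ t ω, |f t ω| ≤ C) (hgbdd : ∃ C : ℝ, ∀ t ω, |g t ω| ≤ C)
    (hfrc : ∀ ω, ∀ t ∈ Set.Ico (0 : ℝ) T,
      ContinuousWithinAt (fun s => f s ω) (Set.Ici t) t)
    (hgrc : ∀ ω, ∀ t ∈ Set.Ico (0 : ℝ) T,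
      ContinuousWithinAt (fun s => g s ω) (Set.Ici t) t) :
    Biadmissible 𝓕 μ T (fun ρ τ ω => W (ρ ω) (τ ω) (f (ρ ω) ω) (g (τ ω) ω)) ∧
    URCE 𝓕 μ T (fun ρ τ ω => W (ρ ω) (τ ω) (f (ρ ω) ω) (g (τ ω) ω)) := by
  obtain ⟨Cf, hCf⟩ := hfbdd
  obtain ⟨Cg, hCg⟩ := hgbdd
  have hL0 : (0:ℝ) ≤ L := hL.le
  -- pointwise bound
  set C0 : ℝ := |W 0 0 0 0| + L * (T + T + Cf + Cg) with hC0
  have hbdU : ∀ ρ τ : Ω → ℝ, (∀ ω, ρ ω ∈ Set.Icc (0:ℝ) T) → (∀ ω, τ ω ∈ Set.Icc (0:ℝ) T) →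
      ∀ ω, |W (ρ ω) (τ ω) (f (ρ ω) ω) (g (τ ω) ω)| ≤ C0 := by
    intro ρ τ hρ hτ ω
    have h0T : (0:ℝ) ∈ Set.Icc (0:ℝ) T := ⟨le_rfl, hT.le⟩
    have hlip := hWLip (ρ ω) (hρ ω) 0 h0T (τ ω) (hτ ω) 0 h0T
      (f (ρ ω) ω) 0 (g (τ ω) ω) 0
    have habs : |W (ρ ω) (τ ω) (f (ρ ω) ω) (g (τ ω) ω)| ≤
        |W (ρ ω) (τ ω) (f (ρ ω) ω) (g (τ ω) ω) - W 0 0 0 0| + |W 0 0 0 0| := by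
      calc |W (ρ ω) (τ ω) (f (ρ ω) ω) (g (τ ω) ω)|
          = |(W (ρ ω) (τ ω) (f (ρ ω) ω) (g (τ ω) ω) - W 0 0 0 0) + W 0 0 0 0| := by ring_nf
        _ ≤ _ := abs_add_le _ _
    have hsum : |ρ ω - 0| + |τ ω - 0| + |f (ρ ω) ω - 0| + |g (τ ω) ω - 0| ≤
        T + T + Cf + Cg := by
      have h1 : |ρ ω - 0| ≤ T := by rw [sub_zero, abs_of_nonneg (hρ ω).1]; exact (hρ ω).2
      have h2 : |τ ω - 0| ≤ T := by rw [sub_zero, abs_of_nonneg (hτ ω).1]; exact (hτ ω).2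
      have h3 : |f (ρ ω) ω - 0| ≤ Cf := by rw [sub_zero]; exact hCf _ _
      have h4 : |g (τ ω) ω - 0| ≤ Cg := by rw [sub_zero]; exact hCg _ _
      linarith
    have := hlip.trans (mul_le_mul_of_nonneg_left hsum hL0)
    rw [hC0]; linarith
  -- measurability
  have measU : ∀ ρ τ : Ω → ℝ, ∀ hρ : ρ ∈ ST 𝓕 T, ∀ hτ : τ ∈ ST 𝓕 T,
      Measurable[(hρ.1.max hτ.1).measurableSpace]
        (fun ω => W (ρ ω) (τ ω) (f (ρ ω) ω) (g (τ ω) ω)) := by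
    intro ρ τ hρ hτ
    have hmax := hρ.1.max hτ.1
    have hρle : (fun ω => (ρ ω : WithTop ℝ)) ≤ fun ω => max (ρ ω : WithTop ℝ) (τ ω) := fun ω => le_max_left _ _
    have hτle : (fun ω => (τ ω : WithTop ℝ)) ≤ fun ω => max (ρ ω : WithTop ℝ) (τ ω) := fun ω => le_max_right _ _
    have hρmono := IsStoppingTime.measurableSpace_mono hρ.1 hmax hρle
    have hτmono := IsStoppingTime.measurableSpace_mono hτ.1 hmax hτle
    have h1 : Measurable[hmax.measurableSpace] ρ := by have := (hρ.1.measurable.mono hρmono le_rfl).untopD (0:ℝ); exact this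
    have h2 : Measurable[hmax.measurableSpace] τ := by have := (hτ.1.measurable.mono hτmono le_rfl).untopD (0:ℝ); exact this
    have h3 : Measurable[hmax.measurableSpace] (fun ω => f (ρ ω) ω) :=
      (measurable_stoppedValue hfprog hρ.1).mono hρmono le_rfl
    have h4 : Measurable[hmax.measurableSpace] (fun ω => g (τ ω) ω) :=
      (measurable_stoppedValue hgprog hτ.1).mono hτmono le_rfl
    exact hWmeas.comp (h1.prodMk (h2.prodMk (h3.prodMk h4)))
  have measU' : ∀ ρ τ : Ω → ℝ, ρ ∈ ST 𝓕 T → τ ∈ ST 𝓕 T →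
      Measurable (fun ω => W (ρ ω) (τ ω) (f (ρ ω) ω) (g (τ ω) ω)) := by
    intro ρ τ hρ hτ
    exact (measU ρ τ hρ hτ).mono (hρ.1.max hτ.1).measurableSpace_le le_rfl
  have intU : ∀ ρ τ : Ω → ℝ, ρ ∈ ST 𝓕 T → τ ∈ ST 𝓕 T →
      Integrable (fun ω => W (ρ ω) (τ ω) (f (ρ ω) ω) (g (τ ω) ω)) μ := by
    intro ρ τ hρ hτ
    refine (integrable_const C0).mono' (measU' ρ τ hρ hτ).aestronglyMeasurable ?_
    exact Eventually.of_forall fun ω => by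
      simpa [Real.norm_eq_abs] using hbdU ρ τ hρ.2 hτ.2 ω
  constructor
  · -- Biadmissible
    refine ⟨⟨C0, fun ρ hρ τ hτ => Eventually.of_forall fun ω => hbdU ρ τ hρ.2 hτ.2 ω⟩,
      fun ρ τ hρ hτ => measU ρ τ hρ hτ, ?_⟩
    intro ρ₁ _ ρ₂ _ τ₁ _ τ₂ _
    exact Eventually.of_forall fun ω h1 h2 => by simp only [h1, h2]
  · -- URCE
    intro ρ hρ τ hτ ρs τs hρs hτs hρconv hτconv
    haveI : Nonempty (ST 𝓕 T) :=
      ⟨⟨fun _ => 0, isStoppingTime_const 𝓕 0, fun ω => ⟨le_rfl, hT.le⟩⟩⟩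
    constructor
    · refine tendsto_ciSup_of_le (fun n ρ' => abs_nonneg _)
        (b := fun n => ∫ ω, L * (|τ ω - τs n ω| + |g (τ ω) ω - g (τs n ω) ω|) ∂μ)
        (fun n ρ' => ?_)
        (urce_half μ 𝓕 T L Cg hL0 g hgprog hCg hgrc τ hτ τs hτs hτconv)
      have hρ' := ρ'.2
      have h1 := intU ρ' τ hρ' hτ
      have h2 := intU ρ' (τs n) hρ' (hτs n)
      have hFint : Integrable
          (fun ω => L * (|τ ω - τs n ω| + |g (τ ω) ω - g (τs n ω) ω|)) μ := by
        have hτm : Measurable τ := by have := (hτ.1.measurable.mono hτ.1.measurableSpace_le le_rfl).untopD (0:ℝ); exact this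
        have hτsm : Measurable (τs n) :=
          by have := ((hτs n).1.measurable.mono (hτs n).1.measurableSpace_le le_rfl).untopD (0:ℝ); exact this
        have hgτ : Measurable fun ω => g (τ ω) ω :=
          (measurable_stoppedValue hgprog hτ.1).mono hτ.1.measurableSpace_le le_rfl
        have hgτs : Measurable fun ω => g (τs n ω) ω :=
          (measurable_stoppedValue hgprog (hτs n).1).mono (hτs n).1.measurableSpace_le le_rfl
        refine (integrable_const (L * (T + (Cg + Cg)))).mono'
          (((hτm.sub hτsm).abs.add ((hgτ.sub hgτs).abs)).const_mul L).aestronglyMeasurable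
          (Eventually.of_forall fun ω => ?_)
        have ha : |τ ω - τs n ω| ≤ T := by
          have hx := hτ.2 ω; have hy := (hτs n).2 ω
          rw [abs_sub_le_iff]
          exact ⟨by linarith [hx.2, hy.1], by linarith [hy.2, hx.1]⟩
        have hb : |g (τ ω) ω - g (τs n ω) ω| ≤ Cg + Cg :=
          (abs_sub _ _).trans (add_le_add (hCg _ _) (hCg _ _))
        have h3 : (0:ℝ) ≤ |τ ω - τs n ω| + |g (τ ω) ω - g (τs n ω) ω| :=
          add_nonneg (abs_nonneg _) (abs_nonneg _)
        rw [Real.norm_eq_abs, abs_of_nonneg (mul_nonneg hL0 h3)]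
        exact mul_le_mul_of_nonneg_left (add_le_add ha hb) hL0
      have hdiff : ∀ ω,
          |W (ρ'.1 ω) (τ ω) (f (ρ'.1 ω) ω) (g (τ ω) ω) -
            W (ρ'.1 ω) (τs n ω) (f (ρ'.1 ω) ω) (g (τs n ω) ω)| ≤
          L * (|τ ω - τs n ω| + |g (τ ω) ω - g (τs n ω) ω|) := by
        intro ω
        have := hWLip (ρ'.1 ω) (hρ'.2 ω) (ρ'.1 ω) (hρ'.2 ω) (τ ω) (hτ.2 ω)
          (τs n ω) ((hτs n).2 ω) (f (ρ'.1 ω) ω) (f (ρ'.1 ω) ω) (g (τ ω) ω) (g (τs n ω) ω)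
        simpa [sub_self, abs_zero] using this
      calc |(∫ ω, W (ρ'.1 ω) (τ ω) (f (ρ'.1 ω) ω) (g (τ ω) ω) ∂μ) -
              ∫ ω, W (ρ'.1 ω) (τs n ω) (f (ρ'.1 ω) ω) (g (τs n ω) ω) ∂μ|
          = |∫ ω, (W (ρ'.1 ω) (τ ω) (f (ρ'.1 ω) ω) (g (τ ω) ω) -
              W (ρ'.1 ω) (τs n ω) (f (ρ'.1 ω) ω) (g (τs n ω) ω)) ∂μ| := by
            rw [integral_sub h1 h2]
        _ ≤ ∫ ω, |W (ρ'.1 ω) (τ ω) (f (ρ'.1 ω) ω) (g (τ ω) ω) -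
              W (ρ'.1 ω) (τs n ω) (f (ρ'.1 ω) ω) (g (τs n ω) ω)| ∂μ := by
            simpa [Real.norm_eq_abs] using
              norm_integral_le_integral_norm (μ := μ)
                (f := fun ω => W (ρ'.1 ω) (τ ω) (f (ρ'.1 ω) ω) (g (τ ω) ω) -
                  W (ρ'.1 ω) (τs n ω) (f (ρ'.1 ω) ω) (g (τs n ω) ω))
        _ ≤ ∫ ω, L * (|τ ω - τs n ω| + |g (τ ω) ω - g (τs n ω) ω|) ∂μ :=
            integral_mono (h1.sub h2).abs hFint hdiff
    · refine tendsto_ciSup_of_le (fun n τ' => abs_nonneg _)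
        (b := fun n => ∫ ω, L * (|ρ ω - ρs n ω| + |f (ρ ω) ω - f (ρs n ω) ω|) ∂μ)
        (fun n τ' => ?_)
        (urce_half μ 𝓕 T L Cf hL0 f hfprog hCf hfrc ρ hρ ρs hρs hρconv)
      have hτ' := τ'.2
      have h1 := intU ρ τ' hρ hτ'
      have h2 := intU (ρs n) τ' (hρs n) hτ'
      have hFint : Integrable
          (fun ω => L * (|ρ ω - ρs n ω| + |f (ρ ω) ω - f (ρs n ω) ω|)) μ := by
        have hρm : Measurable ρ := by have := (hρ.1.measurable.mono hρ.1.measurableSpace_le le_rfl).untopD (0:ℝ); exact this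
        have hρsm : Measurable (ρs n) :=
          by have := ((hρs n).1.measurable.mono (hρs n).1.measurableSpace_le le_rfl).untopD (0:ℝ); exact this
        have hfρ : Measurable fun ω => f (ρ ω) ω :=
          (measurable_stoppedValue hfprog hρ.1).mono hρ.1.measurableSpace_le le_rfl
        have hfρs : Measurable fun ω => f (ρs n ω) ω :=
          (measurable_stoppedValue hfprog (hρs n).1).mono (hρs n).1.measurableSpace_le le_rfl
        refine (integrable_const (L * (T + (Cf + Cf)))).mono'
          (((hρm.sub hρsm).abs.add ((hfρ.sub hfρs).abs)).const_mul L).aestronglyMeasurable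
          (Eventually.of_forall fun ω => ?_)
        have ha : |ρ ω - ρs n ω| ≤ T := by
          have hx := hρ.2 ω; have hy := (hρs n).2 ω
          rw [abs_sub_le_iff]
          exact ⟨by linarith [hx.2, hy.1], by linarith [hy.2, hx.1]⟩
        have hb : |f (ρ ω) ω - f (ρs n ω) ω| ≤ Cf + Cf :=
          (abs_sub _ _).trans (add_le_add (hCf _ _) (hCf _ _))
        have h3 : (0:ℝ) ≤ |ρ ω - ρs n ω| + |f (ρ ω) ω - f (ρs n ω) ω| :=
          add_nonneg (abs_nonneg _) (abs_nonneg _)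
        rw [Real.norm_eq_abs, abs_of_nonneg (mul_nonneg hL0 h3)]
        exact mul_le_mul_of_nonneg_left (add_le_add ha hb) hL0
      have hdiff : ∀ ω,
          |W (ρ ω) (τ'.1 ω) (f (ρ ω) ω) (g (τ'.1 ω) ω) -
            W (ρs n ω) (τ'.1 ω) (f (ρs n ω) ω) (g (τ'.1 ω) ω)| ≤
          L * (|ρ ω - ρs n ω| + |f (ρ ω) ω - f (ρs n ω) ω|) := by
        intro ω
        have := hWLip (ρ ω) (hρ.2 ω) (ρs n ω) ((hρs n).2 ω) (τ'.1 ω) (hτ'.2 ω)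
          (τ'.1 ω) (hτ'.2 ω) (f (ρ ω) ω) (f (ρs n ω) ω) (g (τ'.1 ω) ω) (g (τ'.1 ω) ω)
        have heq : L * (|ρ ω - ρs n ω| + |τ'.1 ω - τ'.1 ω| +
            |f (ρ ω) ω - f (ρs n ω) ω| + |g (τ'.1 ω) ω - g (τ'.1 ω) ω|) =
            L * (|ρ ω - ρs n ω| + |f (ρ ω) ω - f (ρs n ω) ω|) := by
          simp [sub_self, abs_zero]
        rw [heq] at this
        exact this
      calc |(∫ ω, W (ρ ω) (τ'.1 ω) (f (ρ ω) ω) (g (τ'.1 ω) ω) ∂μ) -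
              ∫ ω, W (ρs n ω) (τ'.1 ω) (f (ρs n ω) ω) (g (τ'.1 ω) ω) ∂μ|
          = |∫ ω, (W (ρ ω) (τ'.1 ω) (f (ρ ω) ω) (g (τ'.1 ω) ω) -
              W (ρs n ω) (τ'.1 ω) (f (ρs n ω) ω) (g (τ'.1 ω) ω)) ∂μ| := by
            rw [integral_sub h1 h2]
        _ ≤ ∫ ω, |W (ρ ω) (τ'.1 ω) (f (ρ ω) ω) (g (τ'.1 ω) ω) -
              W (ρs n ω) (τ'.1 ω) (f (ρs n ω) ω) (g (τ'.1 ω) ω)| ∂μ := by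
            simpa [Real.norm_eq_abs] using
              norm_integral_le_integral_norm (μ := μ)
                (f := fun ω => W (ρ ω) (τ'.1 ω) (f (ρ ω) ω) (g (τ'.1 ω) ω) -
                  W (ρs n ω) (τ'.1 ω) (f (ρs n ω) ω) (g (τ'.1 ω) ω))
        _ ≤ ∫ ω, L * (|ρ ω - ρs n ω| + |f (ρ ω) ω - f (ρs n ω) ω|) ∂μ :=
            integral_mono (h1.sub h2).abs hFint hdiff


end OSG
end

section
/- Assume the biadmissible family {U(ρ,τ) : ρ, τ ∈ 𝒯} is URCE. Then for every τ ∈ 𝒯, the essential infimum over strictly later stopping times equals V¹(τ): essinf_{ρ ∈ 𝒯_{τ+}} E[U(ρ,τ) | ℱ_τ] = V¹(τ) almost surely. -/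
open MeasureTheory Filter Set

namespace OSG

variable {Ω : Type*} {m : MeasurableSpace Ω}

section AuxLemmas

open scoped Classical

variable {μ : Measure Ω} {𝓕 : Filtration ℝ m} {T : ℝ} {U : (Ω → ℝ) → (Ω → ℝ) → Ω → ℝ}

lemma integrable_of_bdd [IsProbabilityMeasure μ] {f : Ω → ℝ} {mf : MeasurableSpace Ω}
    (hmf : mf ≤ m) (hmeas : Measurable[mf] f) {C : ℝ} (hC : ∀ᵐ ω ∂μ, |f ω| ≤ C) :
    Integrable f μ := by
  refine ⟨((hmeas.mono hmf le_rfl)).aestronglyMeasurable, HasFiniteIntegral.of_bounded (C := C) ?_⟩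
  filter_upwards [hC] with ω h using by rwa [Real.norm_eq_abs]

lemma abs_integral_le' [IsProbabilityMeasure μ] {f : Ω → ℝ} (hInt : Integrable f μ)
    {C : ℝ} (h : ∀ᵐ ω ∂μ, |f ω| ≤ C) : |∫ ω, f ω ∂μ| ≤ C := by
  calc |∫ ω, f ω ∂μ| ≤ ∫ ω, |f ω| ∂μ := by
        simpa [Real.norm_eq_abs] using norm_integral_le_integral_norm (μ := μ) f
  _ ≤ ∫ _ω, C ∂μ := integral_mono_ae hInt.abs (integrable_const C) h
  _ = C := by simp

lemma key [IsProbabilityMeasure μ]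
    {τ : Ω → ℝ} (hτ : τ ∈ ST 𝓕 T)
    {C : ℝ} (hC0 : 0 ≤ C)
    (hCb : ∀ ρ ∈ ST 𝓕 T, ∀ᵐ ω ∂μ, |U ρ τ ω| ≤ C)
    (hint : ∀ ρ ∈ ST 𝓕 T, Integrable (U ρ τ) μ)
    (hcons : ∀ ρ1 ∈ ST 𝓕 T, ∀ ρ2 ∈ ST 𝓕 T, ∀ᵐ ω ∂μ, ρ1 ω = ρ2 ω → U ρ1 τ ω = U ρ2 τ ω)
    (S : Set (Ω → ℝ)) (hSST : S ⊆ ST 𝓕 T) (hSne : S.Nonempty)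
    (hSpaste : ∀ ρ1 ∈ S, ∀ ρ2 ∈ S, ∀ p : Ω → Prop,
      MeasurableSet[hτ.1.measurableSpace] {ω | p ω} →
      (fun ω => if p ω then ρ1 ω else ρ2 ω) ∈ S) :
    ∃ W : Ω → ℝ, Integrable W μ ∧
      (∀ g : Ω → ℝ, (∀ ρ ∈ S, g ≤ᵐ[μ] μ[U ρ τ | hτ.1.measurableSpace]) → g ≤ᵐ[μ] W) ∧
      (∫ ω, W ω ∂μ) = sInf ((fun ρ => ∫ ω, U ρ τ ω ∂μ) '' S) ∧
      (∀ ρ ∈ S, W ≤ᵐ[μ] μ[U ρ τ | hτ.1.measurableSpace]) := by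
  have hmτ : hτ.1.measurableSpace ≤ m := hτ.1.measurableSpace_le
  set Y : (Ω → ℝ) → Ω → ℝ := fun ρ => μ[U ρ τ | hτ.1.measurableSpace] with hY_def
  set E : (Ω → ℝ) → ℝ := fun ρ => ∫ ω, U ρ τ ω ∂μ with hE_def
  set v := sInf (E '' S) with hv_def
  have hYb : ∀ ρ ∈ ST 𝓕 T, ∀ᵐ ω ∂μ, |Y ρ ω| ≤ C := by
    intro ρ hρ
    have h := ae_bdd_condExp_of_ae_bdd (m := hτ.1.measurableSpace) (μ := μ) (R := ⟨C, hC0⟩) (f := U ρ τ)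
      (hCb ρ hρ)
    exact h
  have hYint : ∀ ρ : Ω → ℝ, Integrable (Y ρ) μ := fun ρ => integrable_condExp
  have hEY : ∀ ρ ∈ ST 𝓕 T, ∫ ω, Y ρ ω ∂μ = E ρ := fun ρ _hρ => integral_condExp hmτ
  have hEb : ∀ ρ ∈ S, -C ≤ E ρ := by
    intro ρ hρ
    have h := abs_le.1 (abs_integral_le' (hint ρ (hSST hρ)) (hCb ρ (hSST hρ)))
    exact h.1
  have hbdd : BddBelow (E '' S) := ⟨-C, by rintro x ⟨ρ, hρ, rfl⟩; exact hEb ρ hρ⟩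
  have hne : (E '' S).Nonempty := hSne.image E
  have hvle : ∀ ρ ∈ S, v ≤ E ρ := fun ρ hρ => csInf_le hbdd ⟨ρ, hρ, rfl⟩
  have hchoice : ∀ k : ℕ, ∃ ρ, ρ ∈ S ∧ E ρ < v + 1/((k:ℝ)+1) := by
    intro k
    have h1 : (0:ℝ) < 1/((k:ℝ)+1) := by positivity
    obtain ⟨x, hx, hlt⟩ := exists_lt_of_csInf_lt hne (show v < v + 1/((k:ℝ)+1) by linarith)
    obtain ⟨ρ, hρ, rfl⟩ := hx
    exact ⟨ρ, hρ, hlt⟩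
  choose r hrS hrE using hchoice
  set paste : (Ω → ℝ) → (Ω → ℝ) → Ω → ℝ :=
    fun ρ1 ρ2 ω => if Y ρ1 ω ≤ Y ρ2 ω then ρ1 ω else ρ2 ω with hpaste_def
  have hYmeas : ∀ ρ : Ω → ℝ, Measurable[hτ.1.measurableSpace] (Y ρ) := fun ρ => stronglyMeasurable_condExp.measurable
  have hpA : ∀ ρ1 ρ2 : Ω → ℝ, MeasurableSet[hτ.1.measurableSpace] {ω | Y ρ1 ω ≤ Y ρ2 ω} := fun ρ1 ρ2 =>
    measurableSet_le (hYmeas ρ1) (hYmeas ρ2)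
  have hpasteS : ∀ ρ1 ∈ S, ∀ ρ2 ∈ S, paste ρ1 ρ2 ∈ S := fun ρ1 h1 ρ2 h2 =>
    hSpaste ρ1 h1 ρ2 h2 _ (hpA ρ1 ρ2)
  have hpasteY : ∀ ρ1 ∈ S, ∀ ρ2 ∈ S,
      Y (paste ρ1 ρ2) =ᵐ[μ] fun ω => min (Y ρ1 ω) (Y ρ2 ω) := by
    intro ρ1 h1 ρ2 h2
    set A := {ω | Y ρ1 ω ≤ Y ρ2 ω} with hA_def
    have hU1 : U (paste ρ1 ρ2) τ
        =ᵐ[μ] fun ω => A.indicator (U ρ1 τ) ω + Aᶜ.indicator (U ρ2 τ) ω := by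
      filter_upwards [hcons ρ1 (hSST h1) (paste ρ1 ρ2) (hSST (hpasteS ρ1 h1 ρ2 h2)),
        hcons ρ2 (hSST h2) (paste ρ1 ρ2) (hSST (hpasteS ρ1 h1 ρ2 h2))] with ω e1 e2
      by_cases h : ω ∈ A
      · rw [Set.indicator_of_mem h, Set.indicator_of_notMem (by simp [h] : ω ∉ Aᶜ), add_zero]
        exact (e1 (if_pos h).symm).symm
      · rw [Set.indicator_of_notMem h, Set.indicator_of_mem (by simp [h] : ω ∈ Aᶜ), zero_add]
        exact (e2 (if_neg h).symm).symm
    have hind1 : Integrable (A.indicator (U ρ1 τ)) μ :=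
      (hint ρ1 (hSST h1)).indicator (hmτ A (hpA ρ1 ρ2))
    have hind2 : Integrable (Aᶜ.indicator (U ρ2 τ)) μ :=
      (hint ρ2 (hSST h2)).indicator (hmτ Aᶜ (hpA ρ1 ρ2).compl)
    calc Y (paste ρ1 ρ2)
        =ᵐ[μ] μ[fun ω => A.indicator (U ρ1 τ) ω + Aᶜ.indicator (U ρ2 τ) ω | hτ.1.measurableSpace] :=
          condExp_congr_ae hU1
      _ =ᵐ[μ] μ[A.indicator (U ρ1 τ) | hτ.1.measurableSpace] + μ[Aᶜ.indicator (U ρ2 τ) | hτ.1.measurableSpace] :=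
          condExp_add hind1 hind2 _
      _ =ᵐ[μ] fun ω => A.indicator (Y ρ1) ω + Aᶜ.indicator (Y ρ2) ω := by
          filter_upwards [condExp_indicator (hint ρ1 (hSST h1)) (hpA ρ1 ρ2),
            condExp_indicator (hint ρ2 (hSST h2)) (hpA ρ1 ρ2).compl] with ω e1 e2
          exact congrArg₂ (· + ·) e1 e2
      _ =ᵐ[μ] fun ω => min (Y ρ1 ω) (Y ρ2 ω) := by
          apply Eventually.of_forall
          intro ω
          show A.indicator (Y ρ1) ω + Aᶜ.indicator (Y ρ2) ω = min (Y ρ1 ω) (Y ρ2 ω)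
          by_cases h : ω ∈ A
          · rw [Set.indicator_of_mem h, Set.indicator_of_notMem (by simp [h] : ω ∉ Aᶜ),
              add_zero, min_eq_left h]
          · have hlt : Y ρ2 ω ≤ Y ρ1 ω := (lt_of_not_ge h).le
            rw [Set.indicator_of_notMem h, Set.indicator_of_mem (by simp [h] : ω ∈ Aᶜ),
              zero_add, min_eq_right hlt]
  set σs : ℕ → Ω → ℝ :=
    fun k => Nat.rec (motive := fun _ => Ω → ℝ) (r 0) (fun k σ => paste σ (r (k+1))) k
    with hσs_def
  have hσsucc : ∀ k, σs (k+1) = paste (σs k) (r (k+1)) := fun k => rfl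
  have hσS : ∀ k, σs k ∈ S := by
    intro k
    induction k with
    | zero => exact hrS 0
    | succ k ih => rw [hσsucc]; exact hpasteS _ ih _ (hrS (k+1))
  have hYσ : ∀ k, Y (σs (k+1)) =ᵐ[μ] fun ω => min (Y (σs k) ω) (Y (r (k+1)) ω) := fun k => by
    rw [hσsucc]; exact hpasteY _ (hσS k) _ (hrS (k+1))
  have hEσ_lt : ∀ k, E (σs k) < v + 1/((k:ℝ)+1) := by
    intro k
    cases k with
    | zero => exact hrE 0
    | succ k =>
      have h1 : ∫ ω, Y (σs (k+1)) ω ∂μ ≤ ∫ ω, Y (r (k+1)) ω ∂μ := by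
        refine integral_mono_ae (hYint _) (hYint _) ?_
        filter_upwards [hYσ k] with ω h
        rw [h]; exact min_le_right _ _
      have h2 : E (σs (k+1)) ≤ E (r (k+1)) := by
        rw [← hEY (σs (k+1)) (hSST (hσS (k+1))), ← hEY (r (k+1)) (hSST (hrS (k+1)))]
        exact h1
      have h3 := hrE (k+1)
      linarith
  have hanti : ∀ᵐ ω ∂μ, ∀ k, Y (σs (k+1)) ω ≤ Y (σs k) ω := by
    rw [ae_all_iff]
    intro k
    filter_upwards [hYσ k] with ω h
    rw [h]; exact min_le_left _ _
  set tr : ℝ → ℝ := fun x => max (min x C) (-C) with htr_def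
  have htr_mono : Monotone tr := fun x y h => max_le_max (min_le_min h le_rfl) le_rfl
  have htr_bdd : ∀ x, -C ≤ tr x ∧ tr x ≤ C := fun x =>
    ⟨le_max_right _ _, max_le (min_le_right _ _) (by linarith)⟩
  have htr_eq : ∀ x, |x| ≤ C → tr x = x := by
    intro x hx
    have h := abs_le.1 hx
    simp [htr_def, min_eq_left h.2, max_eq_left h.1]
  set Yh : ℕ → Ω → ℝ := fun k ω => tr (Y (σs k) ω) with hYh_def
  have hYh_meas : ∀ k, Measurable (Yh k) := fun k =>
    (((hYmeas (σs k)).mono hmτ le_rfl).min measurable_const).max measurable_const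
  have hYh_ae : ∀ k, Yh k =ᵐ[μ] Y (σs k) := by
    intro k
    filter_upwards [hYb (σs k) (hSST (hσS k))] with ω h
    exact htr_eq _ h
  set W : Ω → ℝ := fun ω => ⨅ k, Yh k ω with hW_def
  have hbb : ∀ ω, BddBelow (Set.range fun k => Yh k ω) := fun ω =>
    ⟨-C, by rintro x ⟨k, rfl⟩; exact (htr_bdd _).1⟩
  have hWbdd : ∀ ω, -C ≤ W ω ∧ W ω ≤ C := fun ω =>
    ⟨le_ciInf fun k => (htr_bdd _).1, le_trans (ciInf_le (hbb ω) 0) (htr_bdd _).2⟩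
  have hWle : ∀ k ω, W ω ≤ Yh k ω := fun k ω => ciInf_le (hbb ω) k
  have hYh_anti : ∀ᵐ ω ∂μ, Antitone fun k => Yh k ω := by
    filter_upwards [hanti] with ω h
    exact antitone_nat_of_succ_le fun k => htr_mono (h k)
  have htendW : ∀ᵐ ω ∂μ, Tendsto (fun k => Yh k ω) atTop (nhds (W ω)) := by
    filter_upwards [hYh_anti] with ω h
    exact tendsto_atTop_ciInf h (hbb ω)
  have hWmeas : AEStronglyMeasurable W μ :=
    aestronglyMeasurable_of_tendsto_ae atTop (fun k => (hYh_meas k).aestronglyMeasurable) htendW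
  have hWint : Integrable W μ :=
    ⟨hWmeas, HasFiniteIntegral.of_bounded (C := C) (Eventually.of_forall fun ω => by
      rw [Real.norm_eq_abs, abs_le]; exact hWbdd ω)⟩
  have hDCT : Tendsto (fun k => ∫ ω, Yh k ω ∂μ) atTop (nhds (∫ ω, W ω ∂μ)) :=
    tendsto_integral_of_dominated_convergence (bound := fun _ => C)
      (fun k => (hYh_meas k).aestronglyMeasurable) (integrable_const C)
      (fun k => Eventually.of_forall fun ω => by
        rw [Real.norm_eq_abs, abs_le]; exact htr_bdd _) htendW
  have hEσ_eq : ∀ k, ∫ ω, Yh k ω ∂μ = E (σs k) := fun k =>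
    (integral_congr_ae (hYh_ae k)).trans (hEY _ (hSST (hσS k)))
  have hEσ_tend : Tendsto (fun k => E (σs k)) atTop (nhds (∫ ω, W ω ∂μ)) := by
    refine hDCT.congr fun k => hEσ_eq k
  have hEtendv : Tendsto (fun k => E (σs k)) atTop (nhds v) := by
    have haux : Tendsto (fun k : ℕ => v + 1/((k:ℝ)+1)) atTop (nhds v) := by
      simpa [one_div] using (tendsto_const_nhds (x := v)).add tendsto_one_div_add_atTop_nhds_zero_nat
    exact tendsto_of_tendsto_of_tendsto_of_le_of_le tendsto_const_nhds haux
      (fun k => hvle _ (hσS k)) (fun k => (hEσ_lt k).le)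
  have hEW : ∫ ω, W ω ∂μ = v := tendsto_nhds_unique hEσ_tend hEtendv
  refine ⟨W, hWint, ?_, hEW, ?_⟩
  · intro g hg
    have h1 : ∀ᵐ ω ∂μ, ∀ k, g ω ≤ Yh k ω := by
      rw [ae_all_iff]
      intro k
      filter_upwards [hg _ (hσS k), hYh_ae k] with ω h e
      rw [e]; exact h
    filter_upwards [h1] with ω h
    exact le_ciInf h
  · intro ρ hρ
    set g : ℕ → Ω → ℝ := fun k ω => min (Yh k ω) (Y ρ ω) with hg_def
    have hgae : ∀ k, g k =ᵐ[μ] Y (paste (σs k) ρ) := by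
      intro k
      filter_upwards [hYh_ae k, hpasteY _ (hσS k) _ hρ] with ω e1 e2
      show min (Yh k ω) (Y ρ ω) = Y (paste (σs k) ρ) ω
      rw [e1, e2]
    have hgint : ∀ k, ∫ ω, g k ω ∂μ = E (paste (σs k) ρ) := fun k =>
      (integral_congr_ae (hgae k)).trans (hEY _ (hSST (hpasteS _ (hσS k) _ hρ)))
    have hDCT2 : Tendsto (fun k => ∫ ω, g k ω ∂μ) atTop
        (nhds (∫ ω, min (W ω) (Y ρ ω) ∂μ)) := by
      refine tendsto_integral_of_dominated_convergence (bound := fun ω => C + |Y ρ ω|)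
        (fun k => ((hYh_meas k).min ((hYmeas ρ).mono hmτ le_rfl)).aestronglyMeasurable)
        ((integrable_const C).add (hYint ρ).abs)
        (fun k => Eventually.of_forall fun ω => ?_) ?_
      · rw [Real.norm_eq_abs]
        rcases le_total (Yh k ω) (Y ρ ω) with h | h
        · rw [hg_def]; simp only [min_eq_left h]
          have := abs_le.2 (htr_bdd (Y (σs k) ω))
          have h2 := abs_nonneg (Y ρ ω)
          calc |Yh k ω| ≤ C := this
            _ ≤ C + |Y ρ ω| := by linarith
        · rw [hg_def]; simp only [min_eq_right h]
          have := abs_nonneg (Y ρ ω)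
          linarith [le_abs_self (Y ρ ω), neg_abs_le (Y ρ ω), hC0, abs_nonneg (Y ρ ω),
            le_refl (|Y ρ ω|)]
      · filter_upwards [htendW] with ω h
        exact h.min tendsto_const_nhds
    have hge : ∀ k, v ≤ ∫ ω, g k ω ∂μ := fun k =>
      (hgint k) ▸ hvle _ (hpasteS _ (hσS k) _ hρ)
    have hIge : v ≤ ∫ ω, min (W ω) (Y ρ ω) ∂μ :=
      ge_of_tendsto hDCT2 (Eventually.of_forall hge)
    have hminint : Integrable (fun ω => min (W ω) (Y ρ ω)) μ := hWint.inf (hYint ρ)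
    have hIle : ∫ ω, min (W ω) (Y ρ ω) ∂μ ≤ ∫ ω, W ω ∂μ :=
      integral_mono_ae hminint hWint (Eventually.of_forall fun ω => min_le_left _ _)
    have hnonneg : 0 ≤ fun ω => W ω - min (W ω) (Y ρ ω) := fun ω => by
      simp only [Pi.zero_apply, sub_nonneg]; exact min_le_left _ _
    have hdiff : Integrable (fun ω => W ω - min (W ω) (Y ρ ω)) μ := hWint.sub hminint
    have hint0 : ∫ ω, (W ω - min (W ω) (Y ρ ω)) ∂μ = 0 := by
      rw [integral_sub hWint hminint]
      rw [hEW] at hIle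
      linarith
    have hzero := (integral_eq_zero_iff_of_nonneg hnonneg hdiff).1 hint0
    filter_upwards [hzero] with ω h
    have h1 : W ω - min (W ω) (Y ρ ω) = 0 := h
    have h2 : W ω = min (W ω) (Y ρ ω) := by linarith
    calc W ω = min (W ω) (Y ρ ω) := h2
      _ ≤ Y ρ ω := min_le_right _ _


lemma paste_isStoppingTime {τ ρ1 ρ2 : Ω → ℝ} (hτ : IsStoppingTime 𝓕 (fun ω => (τ ω : WithTop ℝ)))
    (h1 : IsStoppingTime 𝓕 (fun ω => (ρ1 ω : WithTop ℝ))) (h2 : IsStoppingTime 𝓕 (fun ω => (ρ2 ω : WithTop ℝ)))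
    (hle1 : ∀ ω, τ ω ≤ ρ1 ω) (hle2 : ∀ ω, τ ω ≤ ρ2 ω)
    {p : Ω → Prop} (hp : MeasurableSet[hτ.measurableSpace] {ω | p ω}) :
    IsStoppingTime 𝓕 (fun ω => ((if p ω then ρ1 ω else ρ2 ω : ℝ) : WithTop ℝ)) := by
  intro t
  have key : ∀ (q : Ω → Prop), MeasurableSet[hτ.measurableSpace] {ω | q ω} →
      ∀ (ρ : Ω → ℝ), IsStoppingTime 𝓕 (fun ω => (ρ ω : WithTop ℝ)) → (∀ ω, τ ω ≤ ρ ω) →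
      MeasurableSet[𝓕 t] ({ω | q ω} ∩ {ω | (ρ ω : WithTop ℝ) ≤ t}) := by
    intro q hq ρ hρ hle
    have h1 : {ω | q ω} ∩ {ω | (ρ ω : WithTop ℝ) ≤ t} = ({ω | q ω} ∩ {ω | (τ ω : WithTop ℝ) ≤ t}) ∩ {ω | (ρ ω : WithTop ℝ) ≤ t} := by
      ext ω; constructor
      · rintro ⟨hω, hω2⟩; exact ⟨⟨hω, le_trans (WithTop.coe_le_coe.2 (hle ω)) hω2⟩, hω2⟩
      · rintro ⟨⟨hω, _⟩, hω2⟩; exact ⟨hω, hω2⟩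
    rw [h1]
    exact (hq.2 t).inter (hρ t)
  have heq : {ω | ((if p ω then ρ1 ω else ρ2 ω : ℝ) : WithTop ℝ) ≤ t}
      = ({ω | p ω} ∩ {ω | (ρ1 ω : WithTop ℝ) ≤ t}) ∪ ({ω | ¬ p ω} ∩ {ω | (ρ2 ω : WithTop ℝ) ≤ t}) := by
    ext ω
    by_cases h : p ω <;> simp [h]
  show MeasurableSet[𝓕 t] {ω | ((if p ω then ρ1 ω else ρ2 ω : ℝ) : WithTop ℝ) ≤ t}
  rw [heq]
  exact (key p hp ρ1 h1 hle1).union (key (fun ω => ¬ p ω) hp.compl ρ2 h2 hle2)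

lemma approx_mem_ST {ρ : Ω → ℝ} (hρ : ρ ∈ ST 𝓕 T) {c : ℝ} (hc : 0 ≤ c) :
    (fun ω => min (ρ ω + c) T) ∈ ST 𝓕 T := by
  refine ⟨by
    have e : (fun ω => ((min (ρ ω + c) T : ℝ) : WithTop ℝ))
        = fun ω => min ((ρ ω : WithTop ℝ) + c) T := by
      funext ω; norm_cast
    rw [e]; exact IsStoppingTime.min_const (hρ.1.add_const hc) T, fun ω => ?_⟩
  have h := hρ.2 ω
  exact ⟨le_min (by linarith [h.1]) (h.1.trans h.2), min_le_right _ _⟩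

lemma STplus_ae_le {τ ρ : Ω → ℝ} (hτ : τ ∈ ST 𝓕 T) (hρ : ρ ∈ STplus 𝓕 μ T τ) :
    ∀ᵐ ω ∂μ, τ ω ≤ ρ ω := by
  filter_upwards [hρ.2] with ω h
  rcases eq_or_lt_of_le (hτ.2 ω).2 with he | hlt
  · exact le_of_eq (he.trans (h.2 he).symm)
  · exact (h.1 hlt).le

lemma tendsto_integral_approx [IsProbabilityMeasure μ]
    (hU : Biadmissible 𝓕 μ T U) (hU' : URCE 𝓕 μ T U)
    {τ ρ : Ω → ℝ} (hτ : τ ∈ ST 𝓕 T) (hρ : ρ ∈ ST 𝓕 T) :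
    Tendsto (fun n : ℕ => ∫ ω, U (fun ω' => min (ρ ω' + 1/((n:ℝ)+1)) T) τ ω ∂μ) atTop
      (nhds (∫ ω, U ρ τ ω ∂μ)) := by
  obtain ⟨C, hCb⟩ := hU.1
  have hint : ∀ σ1 ∈ ST 𝓕 T, ∀ σ2 ∈ ST 𝓕 T, Integrable (U σ1 σ2) μ := fun σ1 h1 σ2 h2 =>
    integrable_of_bdd ((h1.1.max h2.1).measurableSpace_le) (hU.2.1 σ1 σ2 h1 h2) (hCb σ1 h1 σ2 h2)
  set ρs : ℕ → Ω → ℝ := fun n ω => min (ρ ω + 1/((n:ℝ)+1)) T with hρs_def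
  have hρsST : ∀ n, ρs n ∈ ST 𝓕 T := fun n => approx_mem_ST hρ (by positivity)
  have hmono : ∀ᵐ ω ∂μ, Antitone (fun n => ρs n ω) ∧
      Tendsto (fun n => ρs n ω) atTop (nhds (ρ ω)) := by
    apply Eventually.of_forall
    intro ω
    constructor
    · intro a b hab
      apply min_le_min _ le_rfl
      have h1 : 1/((b:ℝ)+1) ≤ 1/((a:ℝ)+1) := by
        apply one_div_le_one_div_of_le (by positivity)
        have : (a:ℝ) ≤ (b:ℝ) := by exact_mod_cast hab
        linarith
      linarith
    · have h1 : Tendsto (fun n : ℕ => ρ ω + 1/((n:ℝ)+1)) atTop (nhds (ρ ω + 0)) :=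
        tendsto_const_nhds.add tendsto_one_div_add_atTop_nhds_zero_nat
      rw [add_zero] at h1
      have h2 := h1.min (tendsto_const_nhds (x := T))
      rwa [min_eq_left (hρ.2 ω).2] at h2
  have hconst : ∀ᵐ ω ∂μ, Antitone (fun _ : ℕ => τ ω) ∧
      Tendsto (fun _ : ℕ => τ ω) atTop (nhds (τ ω)) :=
    Eventually.of_forall fun ω => ⟨fun _ _ _ => le_rfl, tendsto_const_nhds⟩
  have hTd := (hU' ρ hρ τ hτ ρs (fun _ => τ) hρsST (fun _ => hτ) hmono hconst).2
  have hbdd : ∀ n, BddAbove (Set.range (fun τ' : ST 𝓕 T =>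
      |(∫ ω, U ρ (τ' : Ω → ℝ) ω ∂μ) - ∫ ω, U (ρs n) (τ' : Ω → ℝ) ω ∂μ|)) := by
    intro n
    refine ⟨2*C, ?_⟩
    rintro x ⟨τ', rfl⟩
    have i1 := abs_le.1 (abs_integral_le' (hint ρ hρ τ' τ'.2) (hCb ρ hρ τ' τ'.2))
    have i2 := abs_le.1 (abs_integral_le' (hint (ρs n) (hρsST n) τ' τ'.2)
      (hCb (ρs n) (hρsST n) τ' τ'.2))
    rw [abs_sub_le_iff]
    constructor <;> linarith [i1.1, i1.2, i2.1, i2.2]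
  have hle : ∀ n, |(∫ ω, U ρ τ ω ∂μ) - ∫ ω, U (ρs n) τ ω ∂μ| ≤
      ⨆ τ' : ST 𝓕 T, |(∫ ω, U ρ (τ' : Ω → ℝ) ω ∂μ) - ∫ ω, U (ρs n) (τ' : Ω → ℝ) ω ∂μ| :=
    fun n => le_ciSup (hbdd n) (⟨τ, hτ⟩ : ST 𝓕 T)
  have hsq := squeeze_zero (fun n => abs_nonneg _) hle hTd
  have hgoal : Tendsto (fun n => dist (∫ ω, U (ρs n) τ ω ∂μ) (∫ ω, U ρ τ ω ∂μ)) atTop (nhds 0) := by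
    refine hsq.congr fun n => ?_
    rw [Real.dist_eq, abs_sub_comm]
  exact tendsto_iff_dist_tendsto_zero.2 hgoal

end AuxLemmas

/-- If the biadmissible family `U` is URCE, then for every `τ ∈ 𝒯` the essential infimum of
`E[U(ρ,τ)|ℱ_τ]` over `ρ ∈ 𝒯_{τ+}` equals `V¹(τ)` a.s. (any random variable `Z` which is the
largest one below all `E[U(ρ,τ)|ℱ_τ]`, `ρ ∈ 𝒯_{τ+}`, is a.s. equal to `V¹(τ)`). -/
theorem stmt_11 {Ω : Type*} {m : MeasurableSpace Ω} (μ : Measure Ω) [IsProbabilityMeasure μ]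
    (𝓕 : Filtration ℝ m) (T : ℝ) (hT : 0 < T) (huc : UsualConditions 𝓕 μ T)
    (U : (Ω → ℝ) → (Ω → ℝ) → Ω → ℝ) (hU : Biadmissible 𝓕 μ T U) (hU' : URCE 𝓕 μ T U)
    (V1 : (Ω → ℝ) → Ω → ℝ) (hV1 : IsV1 𝓕 μ T U V1) :
    ∀ τ : Ω → ℝ, ∀ hτ : τ ∈ ST 𝓕 T, ∀ Z : Ω → ℝ,
      (∀ ρ ∈ STplus 𝓕 μ T τ, Z ≤ᵐ[μ] μ[U ρ τ | hτ.1.measurableSpace]) →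
      (∀ Z' : Ω → ℝ,
        (∀ ρ ∈ STplus 𝓕 μ T τ, Z' ≤ᵐ[μ] μ[U ρ τ | hτ.1.measurableSpace]) →
        Z' ≤ᵐ[μ] Z) →
      Z =ᵐ[μ] V1 τ := by
  intro τ hτ Z hZ1 hZ2
  classical
  obtain ⟨C₀, hC₀⟩ := hU.1
  set C := max C₀ 0 with hC_def
  have hC0 : 0 ≤ C := le_max_right _ _
  have hCb : ∀ ρ ∈ ST 𝓕 T, ∀ᵐ ω ∂μ, |U ρ τ ω| ≤ C := fun ρ hρ =>
    (hC₀ ρ hρ τ hτ).mono fun ω h => h.trans (le_max_left _ _)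
  have hint : ∀ ρ ∈ ST 𝓕 T, Integrable (U ρ τ) μ := fun ρ hρ =>
    integrable_of_bdd ((hρ.1.max hτ.1).measurableSpace_le) (hU.2.1 ρ τ hρ hτ) (hCb ρ hρ)
  have hcons : ∀ ρ1 ∈ ST 𝓕 T, ∀ ρ2 ∈ ST 𝓕 T, ∀ᵐ ω ∂μ, ρ1 ω = ρ2 ω → U ρ1 τ ω = U ρ2 τ ω := by
    intro ρ1 h1 ρ2 h2
    filter_upwards [hU.2.2 ρ1 h1 ρ2 h2 τ hτ τ hτ] with ω h
    intro he
    exact h he rfl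
  have hV1' := hV1 τ hτ
  set S' : Set (Ω → ℝ) := {ρ | ρ ∈ ST 𝓕 T ∧ ∀ ω, τ ω ≤ ρ ω} with hS'_def
  set Sp : Set (Ω → ℝ) := {ρ | ρ ∈ STplus 𝓕 μ T τ ∧ ∀ ω, τ ω ≤ ρ ω} with hSp_def
  have hS'ST : S' ⊆ ST 𝓕 T := fun ρ h => h.1
  have hSpST : Sp ⊆ ST 𝓕 T := fun ρ h => h.1.1
  have hTST : (fun _ : Ω => T) ∈ ST 𝓕 T := ⟨isStoppingTime_const 𝓕 T, fun _ω => ⟨hT.le, le_rfl⟩⟩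
  have hTmem' : (fun _ : Ω => T) ∈ S' := ⟨hTST, fun ω => (hτ.2 ω).2⟩
  have hTmemp : (fun _ : Ω => T) ∈ Sp :=
    ⟨⟨hTST, Eventually.of_forall fun ω => ⟨fun h => h, fun _ => rfl⟩⟩, fun ω => (hτ.2 ω).2⟩
  have hpaste' : ∀ ρ1 ∈ S', ∀ ρ2 ∈ S', ∀ p : Ω → Prop,
      MeasurableSet[hτ.1.measurableSpace] {ω | p ω} →
      (fun ω => if p ω then ρ1 ω else ρ2 ω) ∈ S' := by
    rintro ρ1 ⟨h1, hle1⟩ ρ2 ⟨h2, hle2⟩ p hp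
    refine ⟨⟨paste_isStoppingTime hτ.1 h1.1 h2.1 hle1 hle2 hp, fun ω => ?_⟩, fun ω => ?_⟩
    · by_cases h : p ω
      · simpa [h] using h1.2 ω
      · simpa [h] using h2.2 ω
    · by_cases h : p ω
      · simpa [h] using hle1 ω
      · simpa [h] using hle2 ω
  have hpastep : ∀ ρ1 ∈ Sp, ∀ ρ2 ∈ Sp, ∀ p : Ω → Prop,
      MeasurableSet[hτ.1.measurableSpace] {ω | p ω} →
      (fun ω => if p ω then ρ1 ω else ρ2 ω) ∈ Sp := by
    rintro ρ1 ⟨⟨h1, hae1⟩, hle1⟩ ρ2 ⟨⟨h2, hae2⟩, hle2⟩ p hp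
    have hmem := hpaste' ρ1 ⟨h1, hle1⟩ ρ2 ⟨h2, hle2⟩ p hp
    refine ⟨⟨hmem.1, ?_⟩, hmem.2⟩
    filter_upwards [hae1, hae2] with ω a1 a2
    by_cases h : p ω
    · simpa [h] using a1
    · simpa [h] using a2
  obtain ⟨W', hW'int, hW'max, hEW', hW'le⟩ :=
    key hτ hC0 hCb hint hcons S' hS'ST ⟨_, hTmem'⟩ hpaste'
  obtain ⟨Wp, hWpint, hWpmax, hEWp, _⟩ :=
    key hτ hC0 hCb hint hcons Sp hSpST ⟨_, hTmemp⟩ hpastep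
  set E : (Ω → ℝ) → ℝ := fun ρ => ∫ ω, U ρ τ ω ∂μ with hE_def
  have hbddp : BddBelow (E '' Sp) := by
    refine ⟨-C, ?_⟩
    rintro x ⟨ρ, hρ, rfl⟩
    exact (abs_le.1 (abs_integral_le' (hint ρ (hSpST hρ)) (hCb ρ (hSpST hρ)))).1
  have happroxSp : ∀ ρ ∈ S', ∀ n : ℕ, (fun ω => min (ρ ω + 1/((n:ℝ)+1)) T) ∈ Sp := by
    intro ρ hρ n
    have hpos : (0:ℝ) < 1/((n:ℝ)+1) := by positivity
    refine ⟨⟨approx_mem_ST (hS'ST hρ) hpos.le, Eventually.of_forall fun ω => ?_⟩, fun ω => ?_⟩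
    · constructor
      · intro hlt
        exact lt_min (by linarith [hρ.2 ω]) hlt
      · intro heq
        have hρT : ρ ω = T := le_antisymm ((hS'ST hρ).2 ω).2 (heq ▸ hρ.2 ω)
        show min (ρ ω + 1/((n:ℝ)+1)) T = T
        rw [hρT]
        exact min_eq_right (by linarith)
    · exact le_min (by linarith [hρ.2 ω]) (hτ.2 ω).2
  have hvleE : ∀ ρ ∈ S', sInf (E '' Sp) ≤ E ρ := by
    intro ρ hρ
    have htd := tendsto_integral_approx hU hU' hτ (hS'ST hρ)
    refine ge_of_tendsto htd (Eventually.of_forall fun n => ?_)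
    exact csInf_le hbddp ⟨_, happroxSp ρ hρ n, rfl⟩
  have hvv' : sInf (E '' Sp) ≤ sInf (E '' S') := by
    apply le_csInf (Set.Nonempty.image E ⟨_, hTmem'⟩)
    rintro b ⟨ρ, hρ, rfl⟩
    exact hvleE ρ hρ
  have hV1W' : V1 τ ≤ᵐ[μ] W' :=
    hW'max (V1 τ) fun ρ hρ => hV1'.2.1 ρ hρ.1 (Eventually.of_forall hρ.2)
  have hW'V1 : W' ≤ᵐ[μ] V1 τ := by
    apply hV1'.2.2 W'
    intro ρ hρ hle
    have hρ' : (fun ω => max (ρ ω) (τ ω)) ∈ S' := by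
      refine ⟨⟨by
        have e : (fun ω => ((max (ρ ω) (τ ω) : ℝ) : WithTop ℝ))
            = fun ω => max (ρ ω : WithTop ℝ) (τ ω) := by
          funext ω; norm_cast
        rw [e]; exact hρ.1.max hτ.1, fun ω => ?_⟩, fun ω => le_max_right _ _⟩
      exact ⟨le_trans (hρ.2 ω).1 (le_max_left _ _), max_le (hρ.2 ω).2 (hτ.2 ω).2⟩
    have heq : μ[U (fun ω => max (ρ ω) (τ ω)) τ | hτ.1.measurableSpace]
        =ᵐ[μ] μ[U ρ τ | hτ.1.measurableSpace] := by
      apply condExp_congr_ae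
      filter_upwards [hcons (fun ω => max (ρ ω) (τ ω)) (hS'ST hρ') ρ hρ, hle] with ω h hω
      exact h (max_eq_left hω)
    exact (hW'le _ hρ').trans heq.le
  have hW'eq : W' =ᵐ[μ] V1 τ := hW'V1.antisymm hV1W'
  have hEV1 : ∫ ω, V1 τ ω ∂μ = sInf (E '' S') := by
    rw [← integral_congr_ae hW'eq, hEW']
  have hZWp : Z ≤ᵐ[μ] Wp := hWpmax Z fun ρ hρ => hZ1 ρ hρ.1
  have hV1Wp : V1 τ ≤ᵐ[μ] Wp :=
    hWpmax (V1 τ) fun ρ hρ => hV1'.2.1 ρ hρ.1.1 (STplus_ae_le hτ hρ.1)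
  have hV1int : Integrable (V1 τ) μ := hW'int.congr hW'eq
  have hEle : ∫ ω, Wp ω ∂μ ≤ ∫ ω, V1 τ ω ∂μ := by
    rw [hEWp, hEV1]; exact hvv'
  have hdiffl : Integrable (fun ω => Wp ω - V1 τ ω) μ := hWpint.sub hV1int
  have hnn : 0 ≤ᵐ[μ] fun ω => Wp ω - V1 τ ω := by
    filter_upwards [hV1Wp] with ω h
    simpa using sub_nonneg.2 h
  have hz : ∫ ω, (Wp ω - V1 τ ω) ∂μ = 0 := by
    have h2 : 0 ≤ ∫ ω, (Wp ω - V1 τ ω) ∂μ := integral_nonneg_of_ae hnn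
    rw [integral_sub hWpint hV1int] at h2 ⊢
    linarith
  have hWpV1 : Wp =ᵐ[μ] V1 τ := by
    have hae := (integral_eq_zero_iff_of_nonneg_ae hnn hdiffl).1 hz
    filter_upwards [hae] with ω h
    have h1 : Wp ω - V1 τ ω = 0 := h
    linarith
  have hZV1 : Z ≤ᵐ[μ] V1 τ := hZWp.trans hWpV1.le
  have hV1Z : V1 τ ≤ᵐ[μ] Z :=
    hZ2 (V1 τ) fun ρ hρ => hV1'.2.1 ρ hρ.1 (STplus_ae_le hτ hρ)
  exact hZV1.antisymm hV1Z


end OSG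
end

section
/- Assume the biadmissible family {U(ρ,τ) : ρ, τ ∈ 𝒯} is URCE. Then for every ε > 0 and every τ ∈ 𝒯, there exists ρ_τ ∈ 𝒯_{τ+} such that E[ |E[U(ρ_τ,τ) | ℱ_τ] − V¹(τ)| ] < ε. -/
open MeasureTheory Filter Set

namespace OSG

variable {Ω : Type*} {m : MeasurableSpace Ω}

open scoped Classical

section Aux

variable {Ω : Type*} {m : MeasurableSpace Ω} {μ : Measure Ω} [IsProbabilityMeasure μ]
  {𝓕 : Filtration ℝ m} {T : ℝ}

lemma constT_mem (hT : 0 < T) : (fun _ : Ω => T) ∈ ST 𝓕 T :=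
  ⟨isStoppingTime_const 𝓕 T, fun _ => ⟨hT.le, le_rfl⟩⟩

/-- Pasting two stopping times of `𝒯_τ` along a set `A ∈ ℱ_τ`, using completeness. -/
lemma paste_mem (hcomp : ∀ s : Set Ω, μ s = 0 → MeasurableSet[𝓕 0] s)
    {τ ρ1 ρ2 : Ω → ℝ} (hτ : τ ∈ ST 𝓕 T) (hρ1 : ρ1 ∈ ST 𝓕 T) (hρ2 : ρ2 ∈ ST 𝓕 T)
    (h1 : ∀ᵐ ω ∂μ, τ ω ≤ ρ1 ω) (h2 : ∀ᵐ ω ∂μ, τ ω ≤ ρ2 ω)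
    {A : Set Ω} (hA : MeasurableSet[hτ.1.measurableSpace] A) :
    (fun ω => if ω ∈ A then ρ1 ω else ρ2 ω) ∈ ST 𝓕 T ∧
      ∀ᵐ ω ∂μ, τ ω ≤ (if ω ∈ A then ρ1 ω else ρ2 ω) := by
  have hgen : ∀ (B : Set Ω) (ρ : Ω → ℝ), ρ ∈ ST 𝓕 T → (∀ᵐ ω ∂μ, τ ω ≤ ρ ω) →
      MeasurableSet[hτ.1.measurableSpace] B → ∀ t : ℝ,
      MeasurableSet[𝓕 t] (B ∩ {ω | ρ ω ≤ t}) := by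
    intro B ρ hρ hae hB t
    by_cases ht : (0 : ℝ) ≤ t
    · have hsplit : B ∩ {ω | ρ ω ≤ t} =
          (B ∩ {ω | τ ω ≤ t} ∩ {ω | ρ ω ≤ t}) ∪
          (B ∩ {ω | ρ ω ≤ t} ∩ {ω | ¬ τ ω ≤ ρ ω}) := by
        ext ω
        by_cases hτρ : τ ω ≤ ρ ω
        · simp only [Set.mem_inter_iff, Set.mem_union, Set.mem_setOf_eq, hτρ, not_true,
            and_false, or_false]
          constructor
          · rintro ⟨hb, hr⟩; exact ⟨⟨hb, le_trans hτρ hr⟩, hr⟩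
          · rintro ⟨⟨hb, _⟩, hr⟩; exact ⟨hb, hr⟩
        · simp only [Set.mem_inter_iff, Set.mem_union, Set.mem_setOf_eq, hτρ, not_false_iff,
            and_true]
          tauto
      have hp1 : MeasurableSet[𝓕 t] (B ∩ {ω | τ ω ≤ t} ∩ {ω | ρ ω ≤ t}) :=
        by
          have h1 := ((hτ.1.measurableSet B).mp hB).2 t
          have h2 := hρ.1 t
          simp only [WithTop.coe_le_coe] at h1 h2
          exact MeasurableSet.inter h1 h2
      have hnull : μ (B ∩ {ω | ρ ω ≤ t} ∩ {ω | ¬ τ ω ≤ ρ ω}) = 0 := by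
        refine measure_mono_null (fun ω hω => hω.2) ?_
        simpa [ae_iff] using hae
      have hp2 : MeasurableSet[𝓕 t] (B ∩ {ω | ρ ω ≤ t} ∩ {ω | ¬ τ ω ≤ ρ ω}) :=
        𝓕.mono ht _ (hcomp _ hnull)
      rw [hsplit]
      exact MeasurableSet.union hp1 hp2
    · have : B ∩ {ω | ρ ω ≤ t} = ∅ := by
        ext ω
        simp only [Set.mem_inter_iff, Set.mem_setOf_eq, Set.mem_empty_iff_false, iff_false]
        rintro ⟨-, hle⟩
        exact ht (le_trans (hρ.2 ω).1 hle)
      rw [this]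
      exact @MeasurableSet.empty _ (𝓕 t)
  constructor
  · constructor
    · intro t
      simp only [WithTop.coe_le_coe]
      have hset : {ω | (if ω ∈ A then ρ1 ω else ρ2 ω) ≤ t} =
          (A ∩ {ω | ρ1 ω ≤ t}) ∪ (Aᶜ ∩ {ω | ρ2 ω ≤ t}) := by
        ext ω
        by_cases hω : ω ∈ A <;> simp [hω]
      rw [hset]
      exact MeasurableSet.union (hgen A ρ1 hρ1 h1 hA t) (hgen Aᶜ ρ2 hρ2 h2 hA.compl t)
    · intro ω
      by_cases hω : ω ∈ A <;> simp only [hω, if_true, if_false] <;>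
        [exact hρ1.2 ω; exact hρ2.2 ω]
  · filter_upwards [h1, h2] with ω hω1 hω2
    by_cases hω : ω ∈ A <;> simp [hω, hω1, hω2]

end Aux

/-- For every `ε > 0` and `τ ∈ 𝒯`, there exists `ρ_τ ∈ 𝒯_{τ+}` with
`E[|E[U(ρ_τ,τ)|ℱ_τ] - V¹(τ)|] < ε`. -/
theorem stmt_12 {Ω : Type*} {m : MeasurableSpace Ω} (μ : Measure Ω) [IsProbabilityMeasure μ]
    (𝓕 : Filtration ℝ m) (T : ℝ) (hT : 0 < T) (huc : UsualConditions 𝓕 μ T)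
    (U : (Ω → ℝ) → (Ω → ℝ) → Ω → ℝ) (hU : Biadmissible 𝓕 μ T U) (hU' : URCE 𝓕 μ T U)
    (V1 : (Ω → ℝ) → Ω → ℝ) (hV1 : IsV1 𝓕 μ T U V1) :
    ∀ ε : ℝ, 0 < ε → ∀ τ : Ω → ℝ, ∀ hτ : τ ∈ ST 𝓕 T,
      ∃ ρ ∈ STplus 𝓕 μ T τ,
        ∫ ω, |(μ[U ρ τ | hτ.1.measurableSpace]) ω - V1 τ ω| ∂μ < ε := by
  intro ε hε τ hτ
  obtain ⟨C, hC⟩ := hU.1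
  set m' := hτ.1.measurableSpace with hm'def
  have hm' : m' ≤ m := hτ.1.measurableSpace_le
  haveI hfin : IsFiniteMeasure (μ.trim hm') := isFiniteMeasure_trim hm'
  haveI hsf : SigmaFinite (μ.trim hm') := inferInstance
  -- basic integrability and bounds
  have hint : ∀ ρ ∈ ST 𝓕 T, Integrable (U ρ τ) μ := by
    intro ρ hρ
    refine Integrable.mono' (integrable_const C)
      (((hU.2.1 ρ τ hρ hτ).mono ((hρ.1.max hτ.1).measurableSpace_le)
        le_rfl).aestronglyMeasurable) ?_
    simpa [Real.norm_eq_abs] using hC ρ hρ τ hτ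
  have hgbd : ∀ ρ ∈ ST 𝓕 T, ∀ᵐ ω ∂μ, |(μ[U ρ τ|m']) ω| ≤ C := by
    intro ρ hρ
    have hub : μ[U ρ τ|m'] ≤ᵐ[μ] μ[(fun _ => C)|m'] :=
      condExp_mono (hint ρ hρ) (integrable_const C)
        ((hC ρ hρ τ hτ).mono fun ω h => (abs_le.mp h).2)
    have hlb : μ[(fun _ => -C)|m'] ≤ᵐ[μ] μ[U ρ τ|m'] :=
      condExp_mono (integrable_const (-C)) (hint ρ hρ)
        ((hC ρ hρ τ hτ).mono fun ω h => (abs_le.mp h).1)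
    rw [condExp_const hm'] at hub hlb
    filter_upwards [hub, hlb] with ω h1 h2
    exact abs_le.mpr ⟨h2, h1⟩
  have hintb : ∀ ρ ∈ ST 𝓕 T, ∀ σ ∈ ST 𝓕 T, |∫ ω, U ρ σ ω ∂μ| ≤ C := by
    intro ρ hρ σ hσ
    have h := norm_integral_le_of_norm_le_const (μ := μ) (f := U ρ σ) (C := C)
      (by simpa [Real.norm_eq_abs] using hC ρ hρ σ hσ)
    simpa [Real.norm_eq_abs, measure_univ] using h
  -- the value set S and its infimum I
  set S : Set ℝ := {x | ∃ ρ, (ρ ∈ ST 𝓕 T ∧ ∀ᵐ ω ∂μ, τ ω ≤ ρ ω) ∧ x = ∫ ω, U ρ τ ω ∂μ}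
    with hSdef
  have hconstST : (fun _ : Ω => T) ∈ ST 𝓕 T := constT_mem hT
  have hSne : S.Nonempty :=
    ⟨∫ ω, U (fun _ => T) τ ω ∂μ, (fun _ => T),
      ⟨hconstST, Eventually.of_forall fun ω => (hτ.2 ω).2⟩, rfl⟩
  have hSbdd : BddBelow S := by
    refine ⟨-C, ?_⟩
    rintro x ⟨ρ, ⟨hρ, -⟩, rfl⟩
    exact (abs_le.mp (hintb ρ hρ τ hτ)).1
  set I := sInf S with hIdef
  have hIle : ∀ x ∈ S, I ≤ x := fun x hx => csInf_le hSbdd hx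
  -- directedness of the family of conditional expectations
  have hdir : ∀ ρ1 ρ2 : Ω → ℝ, (ρ1 ∈ ST 𝓕 T ∧ ∀ᵐ ω ∂μ, τ ω ≤ ρ1 ω) →
      (ρ2 ∈ ST 𝓕 T ∧ ∀ᵐ ω ∂μ, τ ω ≤ ρ2 ω) →
      ∃ ρ3, (ρ3 ∈ ST 𝓕 T ∧ ∀ᵐ ω ∂μ, τ ω ≤ ρ3 ω) ∧
        μ[U ρ3 τ|m'] ≤ᵐ[μ] μ[U ρ1 τ|m'] ∧ μ[U ρ3 τ|m'] ≤ᵐ[μ] μ[U ρ2 τ|m'] := by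
    rintro ρ1 ρ2 ⟨hρ1, hτρ1⟩ ⟨hρ2, hτρ2⟩
    set A : Set Ω := {ω | (μ[U ρ1 τ|m']) ω ≤ (μ[U ρ2 τ|m']) ω} with hAdef
    have hAm' : MeasurableSet[m'] A :=
      measurableSet_le stronglyMeasurable_condExp.measurable
        stronglyMeasurable_condExp.measurable
    have hAm : MeasurableSet[m] A := hm' _ hAm'
    obtain ⟨hρ3, hτρ3⟩ := paste_mem huc.1 hτ hρ1 hρ2 hτρ1 hτρ2 hAm'
    have heq1 : U (fun ω => if ω ∈ A then ρ1 ω else ρ2 ω) τ =ᵐ[μ.restrict A] U ρ1 τ := by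
      filter_upwards [ae_restrict_of_ae (hU.2.2 _ hρ3 ρ1 hρ1 τ hτ τ hτ), ae_restrict_mem hAm]
        with ω h hωA
      exact h (if_pos hωA) rfl
    have heq2 : U (fun ω => if ω ∈ A then ρ1 ω else ρ2 ω) τ =ᵐ[μ.restrict Aᶜ] U ρ2 τ := by
      filter_upwards [ae_restrict_of_ae (hU.2.2 _ hρ3 ρ2 hρ2 τ hτ τ hτ),
        ae_restrict_mem hAm.compl] with ω h hωA
      exact h (if_neg hωA) rfl
    have key1 : μ[U (fun ω => if ω ∈ A then ρ1 ω else ρ2 ω) τ|m'] =ᵐ[μ.restrict A]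
        μ[U ρ1 τ|m'] :=
      ((condExp_restrict_ae_eq_restrict hm' hAm' (hint _ hρ3)).symm.trans
        (condExp_congr_ae heq1)).trans (condExp_restrict_ae_eq_restrict hm' hAm' (hint ρ1 hρ1))
    have key2 : μ[U (fun ω => if ω ∈ A then ρ1 ω else ρ2 ω) τ|m'] =ᵐ[μ.restrict Aᶜ]
        μ[U ρ2 τ|m'] :=
      ((condExp_restrict_ae_eq_restrict hm' hAm'.compl (hint _ hρ3)).symm.trans
        (condExp_congr_ae heq2)).trans
        (condExp_restrict_ae_eq_restrict hm' hAm'.compl (hint ρ2 hρ2))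
    refine ⟨fun ω => if ω ∈ A then ρ1 ω else ρ2 ω, ⟨hρ3, hτρ3⟩, ?_, ?_⟩
    · refine ae_of_ae_restrict_of_ae_restrict_compl A ?_ ?_
      · filter_upwards [key1] with ω h
        exact le_of_eq h
      · filter_upwards [key2, ae_restrict_mem hAm.compl] with ω h hωA
        rw [h]
        exact le_of_lt (lt_of_not_ge hωA)
    · refine ae_of_ae_restrict_of_ae_restrict_compl A ?_ ?_
      · filter_upwards [key1, ae_restrict_mem hAm] with ω h hωA
        rw [h]
        exact hωA
      · filter_upwards [key2] with ω h
        exact le_of_eq h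
  -- a minimizing sequence
  have hρn : ∀ n : ℕ, ∃ ρ, (ρ ∈ ST 𝓕 T ∧ ∀ᵐ ω ∂μ, τ ω ≤ ρ ω) ∧
      ∫ ω, U ρ τ ω ∂μ < I + 1/((n:ℝ)+1) := by
    intro n
    have hlt : I < I + 1/((n:ℝ)+1) := lt_add_of_pos_right I (by positivity)
    obtain ⟨x, hxS, hxlt⟩ := exists_lt_of_csInf_lt hSne hlt
    obtain ⟨ρ, hρ, rfl⟩ := hxS
    exact ⟨ρ, hρ, hxlt⟩
  choose ρseq hρseqM hρseqE using hρn
  have hdirΓ : ∀ (p : {ρ : Ω → ℝ // ρ ∈ ST 𝓕 T ∧ ∀ᵐ ω ∂μ, τ ω ≤ ρ ω}) (n : ℕ),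
      ∃ r : {ρ : Ω → ℝ // ρ ∈ ST 𝓕 T ∧ ∀ᵐ ω ∂μ, τ ω ≤ ρ ω},
      μ[U r.1 τ|m'] ≤ᵐ[μ] μ[U p.1 τ|m'] ∧ μ[U r.1 τ|m'] ≤ᵐ[μ] μ[U (ρseq n) τ|m'] := by
    intro p n
    obtain ⟨ρ3, h3, ha, hb⟩ := hdir p.1 (ρseq n) p.2 (hρseqM n)
    exact ⟨⟨ρ3, h3⟩, ha, hb⟩
  choose F hF1 hF2 using hdirΓ
  let σΓ : ℕ → {ρ : Ω → ℝ // ρ ∈ ST 𝓕 T ∧ ∀ᵐ ω ∂μ, τ ω ≤ ρ ω} :=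
    fun n => Nat.rec ⟨ρseq 0, hρseqM 0⟩ (fun k prev => F prev (k+1)) n
  set g : ℕ → Ω → ℝ := fun n => μ[U (σΓ n).1 τ|m'] with hgdef
  have hmono : ∀ n, g (n+1) ≤ᵐ[μ] g n := fun n => hF1 (σΓ n) (n+1)
  have hgint : ∀ n, Integrable (g n) μ := fun n => integrable_condExp
  have hgbd' : ∀ n, ∀ᵐ ω ∂μ, |g n ω| ≤ C := fun n => hgbd _ (σΓ n).2.1
  have hgE : ∀ n, ∫ ω, g n ω ∂μ = ∫ ω, U (σΓ n).1 τ ω ∂μ := fun n => integral_condExp hm'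
  have hgElb : ∀ n, I ≤ ∫ ω, g n ω ∂μ := fun n =>
    (hgE n) ▸ hIle _ ⟨(σΓ n).1, (σΓ n).2, rfl⟩
  have hgEub : ∀ n, ∫ ω, g n ω ∂μ ≤ I + 1/((n:ℝ)+1) := by
    intro n
    cases n with
    | zero =>
      rw [hgE 0]
      exact le_of_lt (by exact_mod_cast hρseqE 0)
    | succ k =>
      have h1 : g (k+1) ≤ᵐ[μ] μ[U (ρseq (k+1)) τ|m'] := hF2 (σΓ k) (k+1)
      have h2 : ∫ ω, g (k+1) ω ∂μ ≤ ∫ ω, (μ[U (ρseq (k+1)) τ|m']) ω ∂μ :=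
        integral_mono_ae (hgint (k+1)) integrable_condExp h1
      have h3 : ∫ ω, (μ[U (ρseq (k+1)) τ|m']) ω ∂μ = ∫ ω, U (ρseq (k+1)) τ ω ∂μ :=
        integral_condExp hm'
      exact (h2.trans_eq h3).trans (le_of_lt (by exact_mod_cast hρseqE (k+1)))
  -- the essential lower bound W
  set W : Ω → ℝ := fun ω => ⨅ n, g n ω with hWdef
  have hae1 : ∀ᵐ ω ∂μ, ∀ n, g (n+1) ω ≤ g n ω := ae_all_iff.mpr hmono
  have hae2 : ∀ᵐ ω ∂μ, ∀ n, |g n ω| ≤ C := ae_all_iff.mpr hgbd'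
  have haeW : ∀ᵐ ω ∂μ, Tendsto (fun n => g n ω) atTop (nhds (W ω)) ∧ |W ω| ≤ C := by
    filter_upwards [hae1, hae2] with ω h1 h2
    have hanti : Antitone fun n => g n ω := antitone_nat_of_succ_le h1
    have hbdd : BddBelow (Set.range fun n => g n ω) := by
      refine ⟨-C, ?_⟩
      rintro x ⟨n, rfl⟩
      exact (abs_le.mp (h2 n)).1
    refine ⟨tendsto_atTop_ciInf hanti hbdd, abs_le.mpr ⟨?_, ?_⟩⟩
    · exact le_ciInf fun n => (abs_le.mp (h2 n)).1
    · exact le_trans (ciInf_le hbdd 0) (abs_le.mp (h2 0)).2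
  have hWmeas : Measurable[m] W :=
    Measurable.iInf fun n => (stronglyMeasurable_condExp.mono hm').measurable
  have hWint : Integrable W μ :=
    Integrable.mono' (integrable_const C) hWmeas.aestronglyMeasurable
      (haeW.mono fun ω h => by simpa [Real.norm_eq_abs] using h.2)
  have hWtend : Tendsto (fun n => ∫ ω, g n ω ∂μ) atTop (nhds (∫ ω, W ω ∂μ)) := by
    refine tendsto_integral_of_dominated_convergence (fun _ => C)
      (fun n => (hgint n).aestronglyMeasurable) (integrable_const C) ?_
      (haeW.mono fun ω h => h.1)
    intro n
    exact (hgbd' n).mono fun ω h => by simpa [Real.norm_eq_abs] using h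
  have hWI : ∫ ω, W ω ∂μ = I := by
    refine tendsto_nhds_unique hWtend ?_
    refine tendsto_of_tendsto_of_tendsto_of_le_of_le tendsto_const_nhds ?_ hgElb hgEub
    have h := tendsto_one_div_add_atTop_nhds_zero_nat.const_add I
    simpa using h
  have habsmin : ∀ a b : ℝ, |a| ≤ C → |b| ≤ C → |min a b| ≤ C := fun a b h1 h2 =>
    abs_le.mpr ⟨le_min (abs_le.mp h1).1 (abs_le.mp h2).1,
      le_trans (min_le_left _ _) (abs_le.mp h1).2⟩
  -- W is an essential lower bound of the whole family
  have hWle : ∀ ρ ∈ ST 𝓕 T, (∀ᵐ ω ∂μ, τ ω ≤ ρ ω) → W ≤ᵐ[μ] μ[U ρ τ|m'] := by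
    intro ρ hρ hτρ
    have hgρmeas : Measurable[m] (μ[U ρ τ|m']) := (stronglyMeasurable_condExp.mono hm').measurable
    have hminint : ∀ n, Integrable (fun ω => min (g n ω) ((μ[U ρ τ|m']) ω)) μ := by
      intro n
      refine Integrable.mono' (integrable_const C)
        (((stronglyMeasurable_condExp.mono hm').measurable.min hgρmeas).aestronglyMeasurable) ?_
      filter_upwards [hgbd' n, hgbd ρ hρ] with ω h1 h2
      simpa [Real.norm_eq_abs] using habsmin _ _ h1 h2
    have hminI : ∀ n, I ≤ ∫ ω, min (g n ω) ((μ[U ρ τ|m']) ω) ∂μ := by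
      intro n
      obtain ⟨ρ3, h3, ha, hb⟩ := hdir (σΓ n).1 ρ (σΓ n).2 ⟨hρ, hτρ⟩
      have hle3 : μ[U ρ3 τ|m'] ≤ᵐ[μ] fun ω => min (g n ω) ((μ[U ρ τ|m']) ω) := by
        filter_upwards [ha, hb] with ω h1 h2
        exact le_min h1 h2
      have hI3 : I ≤ ∫ ω, (μ[U ρ3 τ|m']) ω ∂μ := by
        rw [integral_condExp hm']
        exact hIle _ ⟨ρ3, h3, rfl⟩
      exact hI3.trans (integral_mono_ae integrable_condExp (hminint n) hle3)
    have hminint' : Integrable (fun ω => min (W ω) ((μ[U ρ τ|m']) ω)) μ := by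
      refine Integrable.mono' (integrable_const C)
        ((hWmeas.min hgρmeas).aestronglyMeasurable) ?_
      filter_upwards [haeW, hgbd ρ hρ] with ω h1 h2
      simpa [Real.norm_eq_abs] using habsmin _ _ h1.2 h2
    have hmtend : Tendsto (fun n => ∫ ω, min (g n ω) ((μ[U ρ τ|m']) ω) ∂μ) atTop
        (nhds (∫ ω, min (W ω) ((μ[U ρ τ|m']) ω) ∂μ)) := by
      refine tendsto_integral_of_dominated_convergence (fun _ => C)
        (fun n => (hminint n).aestronglyMeasurable) (integrable_const C) ?_ ?_
      · intro n
        filter_upwards [hgbd' n, hgbd ρ hρ] with ω h1 h2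
        simpa [Real.norm_eq_abs] using habsmin _ _ h1 h2
      · filter_upwards [haeW] with ω h
        exact h.1.min tendsto_const_nhds
    have hminI' : ∫ ω, W ω ∂μ ≤ ∫ ω, min (W ω) ((μ[U ρ τ|m']) ω) ∂μ := by
      rw [hWI]
      exact ge_of_tendsto hmtend (Eventually.of_forall hminI)
    have h0 : (0:ℝ) ≤ ∫ ω, (W ω - min (W ω) ((μ[U ρ τ|m']) ω)) ∂μ :=
      integral_nonneg fun ω => sub_nonneg.2 (min_le_left _ _)
    have hdiff : ∫ ω, (W ω - min (W ω) ((μ[U ρ τ|m']) ω)) ∂μ = 0 := by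
      rw [integral_sub hWint hminint'] at h0 ⊢
      linarith
    have hae0 : (fun ω => W ω - min (W ω) ((μ[U ρ τ|m']) ω)) =ᵐ[μ] 0 :=
      (integral_eq_zero_iff_of_nonneg (fun ω => sub_nonneg.2 (min_le_left _ _))
        (hWint.sub hminint')).mp hdiff
    filter_upwards [hae0] with ω h
    have heq : W ω = min (W ω) ((μ[U ρ τ|m']) ω) := by
      have : W ω - min (W ω) ((μ[U ρ τ|m']) ω) = 0 := h
      linarith [this]
    rw [heq]
    exact min_le_right _ _
  have hWV1 : W ≤ᵐ[μ] V1 τ := (hV1 τ hτ).2.2 W hWle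
  have hV1le : V1 τ ≤ᵐ[μ] μ[U (fun _ => T) τ|m'] :=
    (hV1 τ hτ).2.1 (fun _ => T) hconstST (Eventually.of_forall fun ω => (hτ.2 ω).2)
  have hV1int : Integrable (V1 τ) μ := by
    refine Integrable.mono' (integrable_const C)
      (((hV1 τ hτ).1.mono hm').aestronglyMeasurable) ?_
    filter_upwards [hWV1, hV1le, haeW, hgbd _ hconstST] with ω h1 h2 h3 h4
    rw [Real.norm_eq_abs, abs_le]
    exact ⟨le_trans (abs_le.mp h3.2).1 h1, le_trans h2 (abs_le.mp h4).2⟩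
  have hIV1 : I ≤ ∫ ω, V1 τ ω ∂μ := by
    calc I = ∫ ω, W ω ∂μ := hWI.symm
    _ ≤ _ := integral_mono_ae hWint hV1int hWV1
  -- pick a near-optimal ρ* and perturb it strictly beyond τ
  obtain ⟨x, hxS, hxlt⟩ := exists_lt_of_csInf_lt hSne
    (show I < I + ε/2 by linarith)
  obtain ⟨ρstar, ⟨hρstar, hτρstar⟩, rfl⟩ := hxS
  have hcpos : ∀ n : ℕ, (0:ℝ) < 1/((n:ℝ)+1) := fun n => by positivity
  have hθ : ∀ n : ℕ, IsStoppingTime 𝓕 (fun ω => ((min (τ ω + 1/((n:ℝ)+1)) T : ℝ) : WithTop ℝ)) := by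
    intro n t
    simp only [WithTop.coe_le_coe]
    by_cases hTt : T ≤ t
    · have huniv : {ω | min (τ ω + 1/((n:ℝ)+1)) T ≤ t} = Set.univ := by
        ext ω
        simp only [Set.mem_setOf_eq, Set.mem_univ, iff_true]
        exact le_trans (min_le_right _ _) hTt
      rw [huniv]
      exact MeasurableSet.univ
    · have hset : {ω | min (τ ω + 1/((n:ℝ)+1)) T ≤ t} = {ω | τ ω ≤ t - 1/((n:ℝ)+1)} := by
        ext ω
        simp only [Set.mem_setOf_eq, min_le_iff, hTt, or_false]
        constructor
        · intro h; linarith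
        · intro h; linarith
      rw [hset]
      exact 𝓕.mono (by linarith [hcpos n] : t - 1/((n:ℝ)+1) ≤ t) _ (by
        have h := hτ.1 (t - 1/((n:ℝ)+1))
        simp only [WithTop.coe_le_coe] at h
        exact h)
  set ρs : ℕ → Ω → ℝ := fun n ω => max (ρstar ω) (min (τ ω + 1/((n:ℝ)+1)) T) with hρsdef
  have hρsST : ∀ n, ρs n ∈ ST 𝓕 T := by
    intro n
    refine ⟨hρstar.1.max (hθ n), fun ω => ⟨le_trans (hρstar.2 ω).1 (le_max_left _ _), ?_⟩⟩
    exact max_le (hρstar.2 ω).2 (min_le_right _ _)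
  have hτleρs : ∀ n, ∀ ω, τ ω ≤ ρs n ω := by
    intro n ω
    refine le_trans (le_min ?_ (hτ.2 ω).2) (le_max_right _ _)
    linarith [hcpos n]
  have hρsplus : ∀ n, ρs n ∈ STplus 𝓕 μ T τ := by
    intro n
    refine ⟨hρsST n, ?_⟩
    filter_upwards [hτρstar] with ω hω
    constructor
    · intro hlt
      exact lt_of_lt_of_le (lt_min (by linarith [hcpos n]) hlt) (le_max_right _ _)
    · intro heq
      have h1 : ρstar ω = T := le_antisymm (hρstar.2 ω).2 (heq ▸ hω)
      have h2 : min (τ ω + 1/((n:ℝ)+1)) T = T := by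
        rw [heq]
        exact min_eq_right (by linarith [hcpos n])
      show max (ρstar ω) (min (τ ω + 1/((n:ℝ)+1)) T) = T
      rw [h1, h2, max_self]
  have hρsae : ∀ᵐ ω ∂μ, Antitone (fun n => ρs n ω) ∧
      Tendsto (fun n => ρs n ω) atTop (nhds (ρstar ω)) := by
    filter_upwards [hτρstar] with ω hω
    constructor
    · intro a b hab
      refine max_le_max le_rfl (min_le_min (add_le_add le_rfl ?_) le_rfl)
      refine one_div_le_one_div_of_le (by positivity) ?_
      have : (a:ℝ) ≤ (b:ℝ) := Nat.cast_le.mpr hab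
      linarith
    · have h1 : Tendsto (fun n : ℕ => τ ω + 1/((n:ℝ)+1)) atTop (nhds (τ ω)) := by
        simpa using tendsto_one_div_add_atTop_nhds_zero_nat.const_add (τ ω)
      have h2 : Tendsto (fun n : ℕ => min (τ ω + 1/((n:ℝ)+1)) T) atTop
          (nhds (min (τ ω) T)) := h1.min tendsto_const_nhds
      have h3 := (tendsto_const_nhds :
        Tendsto (fun _ : ℕ => ρstar ω) atTop (nhds (ρstar ω))).max h2
      rw [min_eq_left (hτ.2 ω).2, max_eq_left hω] at h3
      exact h3
  obtain ⟨-, hsup⟩ := hU' ρstar hρstar τ hτ ρs (fun _ => τ) hρsST (fun _ => hτ) hρsae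
    (Eventually.of_forall fun ω => ⟨fun a b _ => le_rfl, tendsto_const_nhds⟩)
  obtain ⟨n, hn⟩ := (hsup.eventually_lt_const (show (0:ℝ) < ε/2 by linarith)).exists
  have hbddsup : BddAbove (Set.range fun τ' : ST 𝓕 T =>
      |(∫ ω, U ρstar (↑τ') ω ∂μ) - ∫ ω, U (ρs n) (↑τ') ω ∂μ|) := by
    refine ⟨2*C, ?_⟩
    rintro x ⟨⟨τ', hτ'⟩, rfl⟩
    have h1 := abs_le.mp (hintb ρstar hρstar τ' hτ')
    have h2 := abs_le.mp (hintb (ρs n) (hρsST n) τ' hτ')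
    exact abs_le.mpr ⟨by linarith [h1.1, h2.2], by linarith [h1.2, h2.1]⟩
  have hdn : |(∫ ω, U ρstar τ ω ∂μ) - ∫ ω, U (ρs n) τ ω ∂μ| < ε/2 :=
    lt_of_le_of_lt (le_ciSup hbddsup (⟨τ, hτ⟩ : ST 𝓕 T)) hn
  refine ⟨ρs n, hρsplus n, ?_⟩
  have hgV : V1 τ ≤ᵐ[μ] μ[U (ρs n) τ|m'] :=
    (hV1 τ hτ).2.1 (ρs n) (hρsST n) (Eventually.of_forall (hτleρs n))
  have habs : (fun ω => |(μ[U (ρs n) τ|m']) ω - V1 τ ω|) =ᵐ[μ]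
      fun ω => (μ[U (ρs n) τ|m']) ω - V1 τ ω := by
    filter_upwards [hgV] with ω h
    rw [abs_of_nonneg (by linarith)]
  rw [integral_congr_ae habs, integral_sub integrable_condExp hV1int, integral_condExp hm']
  have h1 := abs_lt.mp hdn
  linarith [h1.1, h1.2, hIV1, hxlt]

end OSG
end

section
/- Assume the biadmissible family {U(ρ,τ) : ρ, τ ∈ 𝒯} is URCE. Then for every ε > 0 and every ρ ∈ 𝒯, there exists τ_ρ ∈ 𝒯_{ρ+} such that E[ |E[U(ρ,τ_ρ) | ℱ_ρ] − V²(ρ)| ] < ε. -/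
open MeasureTheory Filter Set

namespace OSG

variable {Ω : Type*} {m : MeasurableSpace Ω}

section Helpers

variable {𝓕 : Filtration ℝ m} {μ : Measure Ω} {T : ℝ}

/-- under completeness, a.e.-equal sets stay measurable in `𝓕 t` for `t ≥ 0`. -/
private lemma mem_filt_of_ae (hcomp : ∀ s : Set Ω, μ s = 0 → MeasurableSet[𝓕 0] s)
    {t : ℝ} (ht : 0 ≤ t) {s s' : Set Ω} (hs : MeasurableSet[𝓕 t] s)
    (h : μ ((s \ s') ∪ (s' \ s)) = 0) : MeasurableSet[𝓕 t] s' := by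
  have hd : MeasurableSet[𝓕 t] ((s \ s') ∪ (s' \ s)) :=
    𝓕.mono ht _ (hcomp _ h)
  have hd2 : MeasurableSet[𝓕 t] (s' ∩ ((s \ s') ∪ (s' \ s))) :=
    𝓕.mono ht _ (hcomp _ (measure_mono_null Set.inter_subset_right h))
  have hset : s' = (s \ ((s \ s') ∪ (s' \ s))) ∪ (s' ∩ ((s \ s') ∪ (s' \ s))) := by
    ext ω
    by_cases h1 : ω ∈ s <;> by_cases h2 : ω ∈ s' <;> simp [h1, h2]
  rw [hset]
  exact (hs.diff hd).union hd2

open Classical in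
/-- pasting of two functions along a set. -/
private noncomputable def pst (A : Set Ω) (τ₁ τ₂ : Ω → ℝ) : Ω → ℝ :=
  fun ω => if ω ∈ A then τ₁ ω else τ₂ ω

private lemma pst_of_mem {A : Set Ω} {τ₁ τ₂ : Ω → ℝ} {ω : Ω} (h : ω ∈ A) :
    pst A τ₁ τ₂ ω = τ₁ ω := if_pos h

private lemma pst_of_not_mem {A : Set Ω} {τ₁ τ₂ : Ω → ℝ} {ω : Ω} (h : ω ∉ A) :
    pst A τ₁ τ₂ ω = τ₂ ω := if_neg h

/-- the paste of two stopping times after `ρ` along a `ℱ_ρ`-measurable set is a stopping time. -/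
private lemma pst_mem_ST (hcomp : ∀ s : Set Ω, μ s = 0 → MeasurableSet[𝓕 0] s)
    {ρ τ₁ τ₂ : Ω → ℝ} (hρ : ρ ∈ ST 𝓕 T) (hτ₁ : τ₁ ∈ ST 𝓕 T) (hτ₂ : τ₂ ∈ ST 𝓕 T)
    (h1 : ∀ᵐ ω ∂μ, ρ ω ≤ τ₁ ω) (h2 : ∀ᵐ ω ∂μ, ρ ω ≤ τ₂ ω)
    {A : Set Ω} (hA : MeasurableSet[hρ.1.measurableSpace] A) :
    pst A τ₁ τ₂ ∈ ST 𝓕 T := by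
  constructor
  · intro t
    simp only [WithTop.coe_le_coe]
    by_cases ht : 0 ≤ t
    · -- the honest measurable set
      have hS : MeasurableSet[𝓕 t]
          ((A ∩ {ω | ρ ω ≤ t} ∩ {ω | τ₁ ω ≤ t}) ∪
            (Aᶜ ∩ {ω | ρ ω ≤ t} ∩ {ω | τ₂ ω ≤ t})) := by
        refine MeasurableSet.union (MeasurableSet.inter ?_ (by simpa only [WithTop.coe_le_coe] using hτ₁.1 t))
          (MeasurableSet.inter ?_ (by simpa only [WithTop.coe_le_coe] using hτ₂.1 t))
        · simpa only [WithTop.coe_le_coe] using ((hρ.1.measurableSet A).mp hA).2 t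
        · simpa only [WithTop.coe_le_coe] using ((hρ.1.measurableSet Aᶜ).mp hA.compl).2 t
      refine mem_filt_of_ae hcomp ht hS ?_
      have hN : μ ({ω | ¬ ρ ω ≤ τ₁ ω} ∪ {ω | ¬ ρ ω ≤ τ₂ ω}) = 0 := by
        rw [Set.union_def]
        refine measure_mono_null ?_ (measure_union_null
          (ae_iff.mp h1) (ae_iff.mp h2))
        intro ω; simp only [Set.mem_setOf_eq, Set.mem_union]; tauto
      refine measure_mono_null ?_ hN
      rintro ω hω
      simp only [Set.mem_union, Set.mem_setOf_eq]
      by_contra hc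
      push_neg at hc
      obtain ⟨hρ1, hρ2⟩ := hc
      -- so ρ ω ≤ τ₁ ω and ρ ω ≤ τ₂ ω; derive contradiction from hω
      have : (ω ∈ (A ∩ {ω | ρ ω ≤ t} ∩ {ω | τ₁ ω ≤ t}) ∪
          (Aᶜ ∩ {ω | ρ ω ≤ t} ∩ {ω | τ₂ ω ≤ t})) ↔ ω ∈ {ω | pst A τ₁ τ₂ ω ≤ t} := by
        by_cases hmem : ω ∈ A
        · simp only [Set.mem_union, Set.mem_inter_iff, Set.mem_setOf_eq, Set.mem_compl_iff,
            hmem, pst_of_mem hmem, not_true_eq_false, false_and, and_false, or_false,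
            true_and]
          constructor
          · rintro ⟨_, h⟩; exact h
          · intro h; exact ⟨le_trans hρ1 h, h⟩
        · simp only [Set.mem_union, Set.mem_inter_iff, Set.mem_setOf_eq, Set.mem_compl_iff,
            hmem, pst_of_not_mem hmem, not_false_eq_true, false_and, and_false, false_or,
            true_and]
          constructor
          · rintro ⟨_, h⟩; exact h
          · intro h; exact ⟨le_trans hρ2 h, h⟩
      rcases hω with hω | hω
      · exact absurd (this.mp hω.1) hω.2
      · exact absurd (this.mpr hω.1) hω.2
    · -- t < 0 : the set is empty
      have : {ω | pst A τ₁ τ₂ ω ≤ t} = (∅ : Set Ω) := by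
        ext ω
        simp only [Set.mem_setOf_eq, Set.mem_empty_iff_false, iff_false, not_le]
        by_cases hmem : ω ∈ A
        · rw [pst_of_mem hmem]; exact lt_of_lt_of_le (lt_of_not_ge ht) (hτ₁.2 ω).1
        · rw [pst_of_not_mem hmem]; exact lt_of_lt_of_le (lt_of_not_ge ht) (hτ₂.2 ω).1
      rw [this]; exact @MeasurableSet.empty _ (𝓕 t)
  · intro ω
    by_cases hmem : ω ∈ A
    · rw [pst_of_mem hmem]; exact hτ₁.2 ω
    · rw [pst_of_not_mem hmem]; exact hτ₂.2 ω


private lemma condexp_on_set [IsProbabilityMeasure μ] {m' : MeasurableSpace Ω} {f g : Ω → ℝ}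
    (hf : Integrable f μ) (hg : Integrable g μ) {A : Set Ω} (hA : MeasurableSet[m'] A)
    (h : ∀ᵐ ω ∂μ, ω ∈ A → f ω = g ω) :
    ∀ᵐ ω ∂μ, ω ∈ A → (μ[f|m']) ω = (μ[g|m']) ω := by
  have h1 := condExp_indicator (μ := μ) (m := m') hf hA
  have h2 := condExp_indicator (μ := μ) (m := m') hg hA
  have h3 : A.indicator f =ᵐ[μ] A.indicator g := by
    filter_upwards [h] with ω hω
    by_cases hmem : ω ∈ A
    · rw [Set.indicator_of_mem hmem, Set.indicator_of_mem hmem]; exact hω hmem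
    · rw [Set.indicator_of_notMem hmem, Set.indicator_of_notMem hmem]
  have h4 : μ[A.indicator f|m'] =ᵐ[μ] μ[A.indicator g|m'] := condExp_congr_ae h3
  have h5 := (h1.symm.trans h4).trans h2
  filter_upwards [h5] with ω hω hmem
  rwa [Set.indicator_of_mem hmem, Set.indicator_of_mem hmem] at hω

/-- condexp of an a.e.-bounded function is a.e. bounded. -/
private lemma abs_condexp_le [IsProbabilityMeasure μ] {m' : MeasurableSpace Ω} (hm' : m' ≤ m)
    {f : Ω → ℝ} {C : ℝ} (hf : Integrable f μ) (hC : ∀ᵐ ω ∂μ, |f ω| ≤ C) :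
    ∀ᵐ ω ∂μ, |(μ[f|m']) ω| ≤ C := by
  have hup : f ≤ᵐ[μ] fun _ => C := by filter_upwards [hC] with ω hω; exact (abs_le.mp hω).2
  have hlo : (fun _ => -C) ≤ᵐ[μ] f := by filter_upwards [hC] with ω hω; exact (abs_le.mp hω).1
  have h1 : μ[f|m'] ≤ᵐ[μ] μ[fun _ => C|m'] := condExp_mono hf (integrable_const C) hup
  have h2 : μ[fun _ => (-C)|m'] ≤ᵐ[μ] μ[f|m'] := condExp_mono (integrable_const (-C)) hf hlo
  rw [condExp_const hm'] at h1
  rw [condExp_const hm'] at h2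
  filter_upwards [h1, h2] with ω hω1 hω2
  exact abs_le.mpr ⟨hω2, hω1⟩


private lemma condexp_pst [IsProbabilityMeasure μ]
    (hcomp : ∀ s : Set Ω, μ s = 0 → MeasurableSet[𝓕 0] s)
    (U : (Ω → ℝ) → (Ω → ℝ) → Ω → ℝ)
    {ρ τ₁ τ₂ : Ω → ℝ} (hρ : ρ ∈ ST 𝓕 T) (hτ₁ : τ₁ ∈ ST 𝓕 T) (hτ₂ : τ₂ ∈ ST 𝓕 T)
    (h1 : ∀ᵐ ω ∂μ, ρ ω ≤ τ₁ ω) (h2 : ∀ᵐ ω ∂μ, ρ ω ≤ τ₂ ω)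
    (A : Set Ω)
    (hAdef : A = {ω | (μ[U ρ τ₂|hρ.1.measurableSpace]) ω ≤ (μ[U ρ τ₁|hρ.1.measurableSpace]) ω})
    (hint : ∀ τ ∈ ST 𝓕 T, Integrable (U ρ τ) μ)
    (hcons : ∀ τ ∈ ST 𝓕 T, ∀ σ ∈ ST 𝓕 T, ∀ᵐ ω ∂μ, τ ω = σ ω → U ρ τ ω = U ρ σ ω) :
    pst A τ₁ τ₂ ∈ ST 𝓕 T ∧ (∀ᵐ ω ∂μ, ρ ω ≤ pst A τ₁ τ₂ ω) ∧
      μ[U ρ (pst A τ₁ τ₂)|hρ.1.measurableSpace] =ᵐ[μ]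
        fun ω => max ((μ[U ρ τ₁|hρ.1.measurableSpace]) ω)
          ((μ[U ρ τ₂|hρ.1.measurableSpace]) ω) := by
  have hA : MeasurableSet[hρ.1.measurableSpace] A := by
    rw [hAdef]
    exact measurableSet_le stronglyMeasurable_condExp.measurable
      stronglyMeasurable_condExp.measurable
  have hmem := pst_mem_ST hcomp hρ hτ₁ hτ₂ h1 h2 hA
  have hge : ∀ᵐ ω ∂μ, ρ ω ≤ pst A τ₁ τ₂ ω := by
    filter_upwards [h1, h2] with ω hω1 hω2
    by_cases hmem' : ω ∈ A
    · rw [pst_of_mem hmem']; exact hω1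
    · rw [pst_of_not_mem hmem']; exact hω2
  refine ⟨hmem, hge, ?_⟩
  have hcons1 : ∀ᵐ ω ∂μ, ω ∈ A → U ρ (pst A τ₁ τ₂) ω = U ρ τ₁ ω := by
    filter_upwards [hcons (pst A τ₁ τ₂) hmem τ₁ hτ₁] with ω hω hmem'
    exact hω (pst_of_mem hmem')
  have hcons2 : ∀ᵐ ω ∂μ, ω ∈ Aᶜ → U ρ (pst A τ₁ τ₂) ω = U ρ τ₂ ω := by
    filter_upwards [hcons (pst A τ₁ τ₂) hmem τ₂ hτ₂] with ω hω hmem'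
    exact hω (pst_of_not_mem hmem')
  have key1 := condexp_on_set (m' := hρ.1.measurableSpace) (hint _ hmem) (hint _ hτ₁) hA hcons1
  have key2 := condexp_on_set (m' := hρ.1.measurableSpace) (hint _ hmem) (hint _ hτ₂)
    hA.compl hcons2
  filter_upwards [key1, key2] with ω hω1 hω2
  by_cases hmem' : ω ∈ A
  · rw [hω1 hmem']
    have h' : (μ[U ρ τ₂|hρ.1.measurableSpace]) ω ≤ (μ[U ρ τ₁|hρ.1.measurableSpace]) ω := by
      rw [hAdef] at hmem'; exact hmem'
    exact (max_eq_left h').symm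
  · rw [hω2 hmem']
    have h' : (μ[U ρ τ₁|hρ.1.measurableSpace]) ω ≤ (μ[U ρ τ₂|hρ.1.measurableSpace]) ω := by
      rw [hAdef] at hmem'
      simp only [Set.mem_setOf_eq] at hmem'
      exact le_of_lt (lt_of_not_ge hmem')
    exact (max_eq_right h').symm

end Helpers

/-- For every `ε > 0` and `ρ ∈ 𝒯`, there exists `τ_ρ ∈ 𝒯_{ρ+}` with
`E[|E[U(ρ,τ_ρ)|ℱ_ρ] - V²(ρ)|] < ε`. -/
theorem stmt_13 {Ω : Type*} {m : MeasurableSpace Ω} (μ : Measure Ω) [IsProbabilityMeasure μ]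
    (𝓕 : Filtration ℝ m) (T : ℝ) (hT : 0 < T) (huc : UsualConditions 𝓕 μ T)
    (U : (Ω → ℝ) → (Ω → ℝ) → Ω → ℝ) (hU : Biadmissible 𝓕 μ T U) (hU' : URCE 𝓕 μ T U)
    (V2 : (Ω → ℝ) → Ω → ℝ) (hV2 : IsV2 𝓕 μ T U V2) :
    ∀ ε : ℝ, 0 < ε → ∀ ρ : Ω → ℝ, ∀ hρ : ρ ∈ ST 𝓕 T,
      ∃ τ ∈ STplus 𝓕 μ T ρ,
        ∫ ω, |(μ[U ρ τ | hρ.1.measurableSpace]) ω - V2 ρ ω| ∂μ < ε := by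
  intro ε hε ρ hρ
  classical
  have hmρ : hρ.1.measurableSpace ≤ m := hρ.1.measurableSpace_le
  obtain ⟨C₀, hC₀⟩ := hU.1
  set C : ℝ := max C₀ 0 with hCdef
  have hCnn : (0:ℝ) ≤ C := le_max_right _ _
  have hbd : ∀ ρ' ∈ ST 𝓕 T, ∀ τ ∈ ST 𝓕 T, ∀ᵐ ω ∂μ, |U ρ' τ ω| ≤ C := by
    intro ρ' hρ' τ hτ
    filter_upwards [hC₀ ρ' hρ' τ hτ] with ω hω
    exact hω.trans (le_max_left _ _)
  have hint : ∀ ρ' ∈ ST 𝓕 T, ∀ τ ∈ ST 𝓕 T, Integrable (U ρ' τ) μ := by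
    intro ρ' hρ' τ hτ
    refine Integrable.mono' (integrable_const C) ?_ ?_
    · exact ((hU.2.1 ρ' τ hρ' hτ).mono
        (hρ'.1.max hτ.1).measurableSpace_le le_rfl).aestronglyMeasurable
    · simpa [Real.norm_eq_abs] using hbd ρ' hρ' τ hτ
  have hintabs : ∀ ρ' ∈ ST 𝓕 T, ∀ τ ∈ ST 𝓕 T, |∫ ω, U ρ' τ ω ∂μ| ≤ C := by
    intro ρ' hρ' τ hτ
    calc |∫ ω, U ρ' τ ω ∂μ| ≤ ∫ ω, |U ρ' τ ω| ∂μ := by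
          simpa [Real.norm_eq_abs] using norm_integral_le_integral_norm (μ := μ) (U ρ' τ)
    _ ≤ ∫ _ω, C ∂μ :=
        integral_mono_ae (hint ρ' hρ' τ hτ).abs (integrable_const C) (hbd ρ' hρ' τ hτ)
    _ = C := by simp
  have hcons : ∀ τ ∈ ST 𝓕 T, ∀ σ ∈ ST 𝓕 T, ∀ᵐ ω ∂μ, τ ω = σ ω → U ρ τ ω = U ρ σ ω := by
    intro τ hτ σ hσ
    filter_upwards [hU.2.2 ρ hρ ρ hρ τ hτ σ hσ] with ω hω h
    exact hω rfl h
  have hintρ : ∀ τ ∈ ST 𝓕 T, Integrable (U ρ τ) μ := fun τ hτ => hint ρ hρ τ hτ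
  -- the attainable values and their supremum
  set S : Set ℝ :=
    {y | ∃ τ, (τ ∈ ST 𝓕 T ∧ ∀ᵐ ω ∂μ, ρ ω ≤ τ ω) ∧ y = ∫ ω, U ρ τ ω ∂μ} with hSdef
  have hSne : S.Nonempty := ⟨∫ ω, U ρ ρ ω ∂μ, ρ, ⟨hρ, ae_of_all μ fun ω => le_rfl⟩, rfl⟩
  have hSbdd : BddAbove S := by
    refine ⟨C, ?_⟩
    rintro y ⟨τ, ⟨hτ, -⟩, rfl⟩
    exact (abs_le.mp (hintabs ρ hρ τ hτ)).2
  set s := sSup S with hsdef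
  have hmemS_le : ∀ y ∈ S, y ≤ s := fun y hy => le_csSup hSbdd hy
  -- a sequence approaching the supremum
  have hseq : ∀ n : ℕ, ∃ τ, (τ ∈ ST 𝓕 T ∧ ∀ᵐ ω ∂μ, ρ ω ≤ τ ω) ∧
      s - 1 / (n + 1) < ∫ ω, U ρ τ ω ∂μ := by
    intro n
    have hlt : s - 1 / ((n : ℝ) + 1) < s := by
      have h0 : (0:ℝ) < 1 / ((n : ℝ) + 1) := by positivity
      linarith
    obtain ⟨y, hy, hy'⟩ := exists_lt_of_lt_csSup hSne hlt
    obtain ⟨τ, hτ, rfl⟩ := hy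
    exact ⟨τ, hτ, hy'⟩
  choose τs hτs hτs' using hseq
  -- the recursively pasted sequence
  set τ' : ℕ → Ω → ℝ := fun n => Nat.rec (motive := fun _ => Ω → ℝ) (τs 0)
    (fun k p => pst {ω | (μ[U ρ (τs (k+1))|hρ.1.measurableSpace]) ω ≤
      (μ[U ρ p|hρ.1.measurableSpace]) ω} p (τs (k+1))) n with hτ'def
  have hGood : ∀ n, τ' n ∈ ST 𝓕 T ∧ (∀ᵐ ω ∂μ, ρ ω ≤ τ' n ω) := by
    intro n
    induction n with
    | zero => exact hτs 0
    | succ k ih =>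
      obtain ⟨h1, h2, -⟩ := condexp_pst huc.1 U hρ ih.1 (hτs (k+1)).1 ih.2 (hτs (k+1)).2
        _ rfl hintρ hcons
      exact ⟨h1, h2⟩
  have hCmax : ∀ k, μ[U ρ (τ' (k+1))|hρ.1.measurableSpace] =ᵐ[μ]
      fun ω => max ((μ[U ρ (τ' k)|hρ.1.measurableSpace]) ω)
        ((μ[U ρ (τs (k+1))|hρ.1.measurableSpace]) ω) := by
    intro k
    obtain ⟨-, -, h3⟩ := condexp_pst huc.1 U hρ (hGood k).1 (hτs (k+1)).1 (hGood k).2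
      (hτs (k+1)).2 _ rfl hintρ hcons
    exact h3
  set g : ℕ → Ω → ℝ := fun n => μ[U ρ (τ' n)|hρ.1.measurableSpace] with hgdef
  have hgmono : ∀ k, ∀ᵐ ω ∂μ, g k ω ≤ g (k+1) ω := by
    intro k
    filter_upwards [hCmax k] with ω hω
    rw [hgdef]
    simp only []
    rw [show (μ[U ρ (τ' (k+1))|hρ.1.measurableSpace]) ω
      = max ((μ[U ρ (τ' k)|hρ.1.measurableSpace]) ω)
        ((μ[U ρ (τs (k+1))|hρ.1.measurableSpace]) ω) from hω]
    exact le_max_left _ _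
  have hgbd : ∀ n, ∀ᵐ ω ∂μ, |g n ω| ≤ C := fun n =>
    abs_condexp_le hmρ (hintρ _ (hGood n).1) (hbd ρ hρ _ (hGood n).1)
  have hgaesm : ∀ n, AEStronglyMeasurable (g n) μ := fun n =>
    (stronglyMeasurable_condExp.mono hmρ).aestronglyMeasurable
  have hgeq : ∀ n, ∫ ω, g n ω ∂μ = ∫ ω, U ρ (τ' n) ω ∂μ := fun n =>
    integral_condExp hmρ
  have hgup : ∀ n, ∫ ω, g n ω ∂μ ≤ s := by
    intro n
    rw [hgeq n]
    exact hmemS_le _ ⟨τ' n, ⟨(hGood n).1, (hGood n).2⟩, rfl⟩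
  have hglow : ∀ n : ℕ, s - 1 / ((n : ℝ) + 1) < ∫ ω, g n ω ∂μ := by
    intro n
    rw [hgeq n]
    cases n with
    | zero => exact hτs' 0
    | succ k =>
      have hle : μ[U ρ (τs (k+1))|hρ.1.measurableSpace] ≤ᵐ[μ]
          μ[U ρ (τ' (k+1))|hρ.1.measurableSpace] := by
        filter_upwards [hCmax k] with ω hω
        rw [hω]
        exact le_max_right _ _
      have h1 : ∫ ω, U ρ (τs (k+1)) ω ∂μ ≤ ∫ ω, U ρ (τ' (k+1)) ω ∂μ := by
        rw [← integral_condExp (μ := μ) (f := U ρ (τs (k+1))) hmρ,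
          ← integral_condExp (μ := μ) (f := U ρ (τ' (k+1))) hmρ]
        exact integral_mono_ae integrable_condExp integrable_condExp hle
      exact lt_of_lt_of_le (hτs' (k+1)) h1
  -- the a.e. monotone limit
  have haeA : ∀ᵐ ω ∂μ, ∀ k, g k ω ≤ g (k+1) ω := ae_all_iff.mpr hgmono
  have haeB : ∀ᵐ ω ∂μ, ∀ n, |g n ω| ≤ C := ae_all_iff.mpr hgbd
  set G : Ω → ℝ := fun ω => ⨆ n, g n ω with hGdef
  have htend : ∀ᵐ ω ∂μ, Tendsto (fun n => g n ω) atTop (nhds (G ω)) := by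
    filter_upwards [haeA, haeB] with ω h1 h2
    exact tendsto_atTop_ciSup (monotone_nat_of_le_succ h1)
      ⟨C, by rintro _ ⟨n, rfl⟩; exact (abs_le.mp (h2 n)).2⟩
  have hGaesm : AEStronglyMeasurable G μ :=
    aestronglyMeasurable_of_tendsto_ae atTop hgaesm htend
  have hGbd : ∀ᵐ ω ∂μ, |G ω| ≤ C := by
    filter_upwards [haeA, haeB] with ω h1 h2
    have hba : BddAbove (Set.range fun n => g n ω) :=
      ⟨C, by rintro _ ⟨n, rfl⟩; exact (abs_le.mp (h2 n)).2⟩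
    refine abs_le.mpr ⟨?_, ciSup_le fun n => (abs_le.mp (h2 n)).2⟩
    exact le_trans (abs_le.mp (h2 0)).1 (le_ciSup hba 0)
  have hGint : Integrable G μ :=
    Integrable.mono' (integrable_const C) hGaesm
      (by simpa [Real.norm_eq_abs] using hGbd)
  have hItend : Tendsto (fun n => ∫ ω, g n ω ∂μ) atTop (nhds (∫ ω, G ω ∂μ)) :=
    tendsto_integral_of_dominated_convergence (fun _ => C) hgaesm (integrable_const C)
      (fun n => by simpa [Real.norm_eq_abs] using hgbd n) htend
  have hIs : Tendsto (fun n => ∫ ω, g n ω ∂μ) atTop (nhds s) := by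
    have hlowt : Tendsto (fun n : ℕ => s - 1 / ((n : ℝ) + 1)) atTop (nhds s) := by
      have h0 := Tendsto.sub (tendsto_const_nhds (x := s) (f := atTop (α := ℕ)))
        tendsto_one_div_add_atTop_nhds_zero_nat
      simpa using h0
    exact tendsto_of_tendsto_of_tendsto_of_le_of_le hlowt tendsto_const_nhds
      (fun n => (hglow n).le) hgup
  have hGs : ∫ ω, G ω ∂μ = s := tendsto_nhds_unique hItend hIs
  -- G dominates every conditional expectation
  have hub : ∀ τ ∈ ST 𝓕 T, (∀ᵐ ω ∂μ, ρ ω ≤ τ ω) →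
      μ[U ρ τ|hρ.1.measurableSpace] ≤ᵐ[μ] G := by
    intro τ hτ hτρ
    have hhbd : ∀ᵐ ω ∂μ, |(μ[U ρ τ|hρ.1.measurableSpace]) ω| ≤ C :=
      abs_condexp_le hmρ (hintρ τ hτ) (hbd ρ hρ τ hτ)
    have hhaesm : AEStronglyMeasurable (μ[U ρ τ|hρ.1.measurableSpace]) μ :=
      (stronglyMeasurable_condExp.mono hmρ).aestronglyMeasurable
    have hn : ∀ n, ∫ ω, max (g n ω) ((μ[U ρ τ|hρ.1.measurableSpace]) ω) ∂μ ≤ s := by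
      intro n
      obtain ⟨hσ1, hσ2, hσ3⟩ := condexp_pst huc.1 U hρ (hGood n).1 hτ (hGood n).2 hτρ
        _ rfl hintρ hcons
      have he1 : ∫ ω, max (g n ω) ((μ[U ρ τ|hρ.1.measurableSpace]) ω) ∂μ
          = ∫ ω, (μ[U ρ (pst {ω | (μ[U ρ τ|hρ.1.measurableSpace]) ω ≤
              (μ[U ρ (τ' n)|hρ.1.measurableSpace]) ω} (τ' n) τ)|hρ.1.measurableSpace]) ω ∂μ :=
        (integral_congr_ae hσ3).symm
      rw [he1, integral_condExp hmρ]
      exact hmemS_le _ ⟨_, ⟨hσ1, hσ2⟩, rfl⟩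
    have htendmax : ∀ᵐ ω ∂μ, Tendsto
        (fun n => max (g n ω) ((μ[U ρ τ|hρ.1.measurableSpace]) ω)) atTop
        (nhds (max (G ω) ((μ[U ρ τ|hρ.1.measurableSpace]) ω))) := by
      filter_upwards [htend] with ω hω
      exact hω.max tendsto_const_nhds
    have hmaxbd : ∀ n, ∀ᵐ ω ∂μ,
        ‖max (g n ω) ((μ[U ρ τ|hρ.1.measurableSpace]) ω)‖ ≤ C := by
      intro n
      filter_upwards [hgbd n, hhbd] with ω h1 h2
      rw [Real.norm_eq_abs]
      refine abs_le.mpr ⟨?_, max_le (abs_le.mp h1).2 (abs_le.mp h2).2⟩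
      exact le_trans (abs_le.mp h1).1 (le_max_left _ _)
    have hImaxtend : Tendsto
        (fun n => ∫ ω, max (g n ω) ((μ[U ρ τ|hρ.1.measurableSpace]) ω) ∂μ) atTop
        (nhds (∫ ω, max (G ω) ((μ[U ρ τ|hρ.1.measurableSpace]) ω) ∂μ)) :=
      tendsto_integral_of_dominated_convergence (fun _ => C)
        (fun n => (hgaesm n).sup hhaesm) (integrable_const C) hmaxbd htendmax
    have hImax_le : ∫ ω, max (G ω) ((μ[U ρ τ|hρ.1.measurableSpace]) ω) ∂μ ≤ s :=
      le_of_tendsto hImaxtend (Filter.Eventually.of_forall hn)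
    have hmaxint : Integrable (fun ω => max (G ω) ((μ[U ρ τ|hρ.1.measurableSpace]) ω)) μ :=
      hGint.sup integrable_condExp
    have hdiffint : Integrable
        (fun ω => max (G ω) ((μ[U ρ τ|hρ.1.measurableSpace]) ω) - G ω) μ :=
      hmaxint.sub hGint
    have hIdiff : ∫ ω, (max (G ω) ((μ[U ρ τ|hρ.1.measurableSpace]) ω) - G ω) ∂μ = 0 := by
      rw [integral_sub hmaxint hGint]
      have hge0 : 0 ≤ ∫ ω, (max (G ω) ((μ[U ρ τ|hρ.1.measurableSpace]) ω) - G ω) ∂μ :=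
        integral_nonneg fun ω => sub_nonneg.mpr (le_max_left _ _)
      rw [integral_sub hmaxint hGint] at hge0
      have := hGs
      linarith [hImax_le]
    have hzero := (integral_eq_zero_iff_of_nonneg_ae
      (ae_of_all _ fun ω => sub_nonneg.mpr (le_max_left _ _)) hdiffint).mp hIdiff
    filter_upwards [hzero] with ω hω
    have h1 : max (G ω) ((μ[U ρ τ|hρ.1.measurableSpace]) ω) - G ω = 0 := hω
    have h2 : max (G ω) ((μ[U ρ τ|hρ.1.measurableSpace]) ω) = G ω := by linarith
    calc (μ[U ρ τ|hρ.1.measurableSpace]) ω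
        ≤ max (G ω) ((μ[U ρ τ|hρ.1.measurableSpace]) ω) := le_max_right _ _
      _ = G ω := h2
  have hVle : V2 ρ ≤ᵐ[μ] G := (hV2 ρ hρ).2.2 G hub
  -- integrability of V2 ρ
  have hg0le : g 0 ≤ᵐ[μ] V2 ρ := (hV2 ρ hρ).2.1 (τ' 0) (hGood 0).1 (hGood 0).2
  have hV2int : Integrable (V2 ρ) μ := by
    refine Integrable.mono' (integrable_const C)
      (((hV2 ρ hρ).1.mono hmρ).aestronglyMeasurable) ?_
    filter_upwards [hg0le, hVle, hGbd, hgbd 0] with ω h1 h2 h3 h4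
    rw [Real.norm_eq_abs]
    exact abs_le.mpr ⟨le_trans (abs_le.mp h4).1 h1, le_trans h2 (abs_le.mp h3).2⟩
  have hIV2 : ∫ ω, V2 ρ ω ∂μ ≤ s := by
    rw [← hGs]
    exact integral_mono_ae hV2int hGint hVle
  -- select a near-optimal stopping time
  obtain ⟨y, hyS, hy⟩ := exists_lt_of_lt_csSup hSne (show s - ε/2 < s by linarith)
  obtain ⟨τstar, ⟨hτstar, hτstarρ⟩, rfl⟩ := hyS
  -- shift it to the strict future
  set τn : ℕ → Ω → ℝ := fun n ω => min (τstar ω + 1/((n:ℝ)+1)) T with hτndef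
  have hτnST : ∀ n, τn n ∈ ST 𝓕 T := by
    intro n
    refine ⟨(hτstar.1.add_const (by positivity : (0:ℝ) ≤ 1/((n:ℝ)+1))).min_const T, ?_⟩
    intro ω
    refine ⟨le_min (add_nonneg (hτstar.2 ω).1 (by positivity)) hT.le, min_le_right _ _⟩
  have hτnρ : ∀ n, ∀ᵐ ω ∂μ, ρ ω ≤ τn n ω := by
    intro n
    filter_upwards [hτstarρ] with ω hω
    have hpos : (0:ℝ) < 1/((n:ℝ)+1) := by positivity
    exact le_min (by linarith) ((hρ.2 ω).2)
  have hτnplus : ∀ n, τn n ∈ STplus 𝓕 μ T ρ := by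
    intro n
    refine ⟨hτnST n, ?_⟩
    filter_upwards [hτstarρ] with ω hω
    have hpos : (0:ℝ) < 1/((n:ℝ)+1) := by positivity
    constructor
    · intro hlt
      exact lt_min (by linarith) hlt
    · intro heq
      have h1 : τstar ω = T := le_antisymm (hτstar.2 ω).2 (heq ▸ hω)
      show min (τstar ω + 1/((n:ℝ)+1)) T = T
      rw [h1]
      exact min_eq_right (by linarith)
  have hτnanti : ∀ᵐ ω ∂μ, Antitone (fun n => τn n ω) ∧
      Tendsto (fun n => τn n ω) atTop (nhds (τstar ω)) := by
    refine ae_of_all μ fun ω => ⟨?_, ?_⟩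
    · intro a b hab
      refine min_le_min (add_le_add_right ?_ _) le_rfl
      refine one_div_le_one_div_of_le (by positivity) ?_
      have : (a : ℝ) ≤ (b : ℝ) := Nat.cast_le.mpr hab
      linarith
    · have h1 : Tendsto (fun n : ℕ => τstar ω + 1/((n:ℝ)+1)) atTop
          (nhds (τstar ω + 0)) :=
        tendsto_const_nhds.add tendsto_one_div_add_atTop_nhds_zero_nat
      have h2 := h1.min (tendsto_const_nhds (x := T))
      rw [add_zero, min_eq_left (hτstar.2 ω).2] at h2
      exact h2
  have hρconst : ∀ᵐ ω ∂μ, Antitone (fun _ : ℕ => ρ ω) ∧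
      Tendsto (fun _ : ℕ => ρ ω) atTop (nhds (ρ ω)) :=
    ae_of_all μ fun ω => ⟨fun a b _ => le_rfl, tendsto_const_nhds⟩
  obtain ⟨hten, -⟩ := hU' ρ hρ τstar hτstar (fun _ => ρ) τn (fun _ => hρ) hτnST
    hρconst hτnanti
  obtain ⟨n, hn⟩ := (hten.eventually (gt_mem_nhds (show (0:ℝ) < ε/2 by linarith))).exists
  have hbdd : BddAbove (Set.range fun ρ' : ST 𝓕 T =>
      |(∫ ω, U ρ' τstar ω ∂μ) - ∫ ω, U ρ' (τn n) ω ∂μ|) := by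
    refine ⟨2*C, ?_⟩
    rintro _ ⟨ρ', rfl⟩
    have h1 := hintabs ρ' ρ'.2 τstar hτstar
    have h2 := hintabs ρ' ρ'.2 (τn n) (hτnST n)
    have h3 : |(∫ ω, U ρ' τstar ω ∂μ) - ∫ ω, U ρ' (τn n) ω ∂μ|
        ≤ |∫ ω, U ρ' τstar ω ∂μ| + |∫ ω, U ρ' (τn n) ω ∂μ| := by
      rw [sub_eq_add_neg]
      exact (abs_add_le _ _).trans (by rw [abs_neg])
    linarith
  have hterm : |(∫ ω, U ρ τstar ω ∂μ) - ∫ ω, U ρ (τn n) ω ∂μ| < ε/2 :=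
    lt_of_le_of_lt (le_ciSup hbdd ⟨ρ, hρ⟩) hn
  refine ⟨τn n, hτnplus n, ?_⟩
  have hle : μ[U ρ (τn n)|hρ.1.measurableSpace] ≤ᵐ[μ] V2 ρ :=
    (hV2 ρ hρ).2.1 (τn n) (hτnST n) (hτnρ n)
  have heq : ∫ ω, |(μ[U ρ (τn n)|hρ.1.measurableSpace]) ω - V2 ρ ω| ∂μ
      = ∫ ω, (V2 ρ ω - (μ[U ρ (τn n)|hρ.1.measurableSpace]) ω) ∂μ := by
    refine integral_congr_ae ?_
    filter_upwards [hle] with ω hω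
    rw [abs_sub_comm, abs_of_nonneg (by linarith)]
  rw [heq, integral_sub hV2int integrable_condExp, integral_condExp hmρ]
  have h1 : (∫ ω, U ρ τstar ω ∂μ) - ε/2 < ∫ ω, U ρ (τn n) ω ∂μ := by
    have h2 := abs_lt.mp hterm
    linarith [h2.1, h2.2]
  linarith [hIV2, hy, h1]


end OSG
end
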